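/- arXiv:2003.09095 — 4 statements merged into one kernel-verified Lean document; each statement's English description precedes it below -/
import Mathlib

section
/- Let n ≥ 3. Every PCR-type cycle P of the PRR of order n other than the cycle {(1,…,1)} contains at least one state whose first coordinate is 0; choose one such state sel(P) in each such cycle. For c = (c_0,…,c_{n-1}) ∈ F₂ⁿ define the state x_c by: x_c = (0, c_1,…,c_{n-1}) if c_{n-1} = 0, and x_c = (c_1+1, c_2+1, …, c_{n-2}+1, 0, c_1) if c_{n-1} = 1. Let A = { c ∈ F₂ⁿ : either (c_{n-1} = 0 and x_c = sel(P), where P is the (PCR-type) cycle containing x_c), or (c_{n-1} = 1 and x_c is the cycle representative of the (CCR-type) cycle containing x_c) }. Then, for every such choice of the states sel(P), the successor rule Υ defined by Υ(c) = c_0 + c_1 + c_{n-1} + 1 if c ∈ A and Υ(c) = c_0 + c_1 + c_{n-1} otherwise generates a de Bruijn sequence of order n. -/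
attribute [local instance] Classical.propDecidable

abbrev F2 := ZMod 2

/-- Coordinate access with default value `0` outside the range. -/
noncomputable def get {n : ℕ} (c : Fin n → F2) (j : ℕ) : F2 :=
  if h : j < n then c ⟨j, h⟩ else 0

/-- Lexicographic order on binary tuples (coordinates compared from index 0, with 0 < 1). -/
def lexLe {m : ℕ} (v w : Fin m → F2) : Prop :=
  ∀ j : Fin m, (∀ i : Fin m, i < j → v i = w i) → (v j).val ≤ (w j).val

def lexLt {m : ℕ} (v w : Fin m → F2) : Prop := lexLe v w ∧ v ≠ w

/-- Left cyclic rotation by `r`. -/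
def rot {m : ℕ} (r : ℕ) (w : Fin m → F2) : Fin m → F2 :=
  fun i => w ⟨((i : ℕ) + r) % m, Nat.mod_lt _ i.pos⟩

/-- `w` is lexicographically minimal among its cyclic rotations. -/
def IsNecklace {m : ℕ} (w : Fin m → F2) : Prop := ∀ r : ℕ, lexLe w (rot r w)

/-- `w` followed by its coordinatewise complement. -/
def complAppend {m : ℕ} (w : Fin m → F2) : Fin (2 * m) → F2 :=
  fun i => if h : (i : ℕ) < m then w ⟨(i : ℕ), h⟩
           else w ⟨(i : ℕ) - m, by have := i.isLt; omega⟩ + 1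

def IsCoNecklace {m : ℕ} (w : Fin m → F2) : Prop := IsNecklace (complAppend w)

/-- The last `n-1` coordinates of an `n`-stage state. -/
def stTail {n : ℕ} (c : Fin n → F2) : Fin (n - 1) → F2 :=
  fun i => c ⟨(i : ℕ) + 1, by have := i.isLt; omega⟩

/-- The state map of a successor rule/feedback function:
`(c_0,…,c_{n-1}) ↦ (c_1,…,c_{n-1}, ρ(c))`. -/
def nextMap {n : ℕ} (ρ : (Fin n → F2) → F2) (c : Fin n → F2) : Fin n → F2 :=
  fun i => if h : (i : ℕ) + 1 < n then c ⟨(i : ℕ) + 1, h⟩ else ρ c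

/-- Feedback of the pure run-length register: `c_0 + c_1 + c_{n-1}`. -/
noncomputable def fPRR {n : ℕ} (c : Fin n → F2) : F2 :=
  get c 0 + get c 1 + get c (n - 1)

/-- The successor rule `ρ` generates a de Bruijn sequence of order `n`,
i.e. all `2^n` states lie in a single orbit of its state map. -/
def generatesDB {n : ℕ} (ρ : (Fin n → F2) → F2) : Prop :=
  ∀ x y : Fin n → F2, ∃ k : ℕ, (nextMap ρ)^[k] x = y

def inOrbit {α : Type*} (σ : α → α) (v w : α) : Prop := ∃ k : ℕ, σ^[k] v = w

def orbit {α : Type*} (σ : α → α) (v : α) : Set α := {w | inOrbit σ v w}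

/-- `v` is the cycle representative (the lexicographically least state) of its orbit. -/
def isCycleRep {m : ℕ} (σ : (Fin m → F2) → (Fin m → F2)) (v : Fin m → F2) : Prop :=
  ∀ w ∈ orbit σ v, lexLe v w

/-- Hamming weight. -/
noncomputable def wt {m : ℕ} (u : Fin m → F2) : ℕ :=
  (Finset.univ.filter (fun j : Fin m => u j = 1)).card

/-- The operator `Λ`: cyclically shift a nonzero tuple so that its first `1`
moves to the end (identity on the zero tuple). -/
noncomputable def Lam {m : ℕ} (u : Fin m → F2) : Fin m → F2 :=
  if h : (Finset.univ.filter (fun j : Fin m => u j = 1)).Nonempty then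
    rot (((Finset.univ.filter (fun j : Fin m => u j = 1)).min' h).val + 1) u
  else u

/-- The operator `Θ`: if `j ≥ 1` is the least index (0-based) with `u j = 0`,
rotate left by `j`; fixes tuples with no such index. -/
noncomputable def Theta {m : ℕ} (u : Fin m → F2) : Fin m → F2 :=
  if h : (Finset.univ.filter (fun j : Fin m => 0 < (j : ℕ) ∧ u j = 0)).Nonempty then
    rot ((Finset.univ.filter (fun j : Fin m => 0 < (j : ℕ) ∧ u j = 0)).min' h).val u
  else u

/-- Conjugate state: first bit complemented. -/
def conjSt {n : ℕ} (v : Fin n → F2) : Fin n → F2 :=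
  fun i => if (i : ℕ) = 0 then v i + 1 else v i

/-- Companion state: last bit complemented. -/
def compSt {n : ℕ} (v : Fin n → F2) : Fin n → F2 :=
  fun i => if (i : ℕ) + 1 = n then v i + 1 else v i

/-- `(c_1,…,c_{n-1}, b)`. -/
def shiftIn {n : ℕ} (c : Fin n → F2) (b : F2) : Fin n → F2 :=
  fun i => if h : (i : ℕ) + 1 < n then c ⟨(i : ℕ) + 1, h⟩ else b

/-- `lcm(1,2,…,m)`. -/
def lcmUpTo (m : ℕ) : ℕ := (Finset.Icc 1 m).lcm id

/-- Admissible parameters `1 = k_1 < k_2 < … < k_t = n`, `k_{t-1} < n-1`, `2 ≤ t ≤ n-1`,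
for the rules `Ψ₁` and `Υ₁` (the values `k 1, …, k t` of `k : ℕ → ℕ`). -/
def validParams (n t : ℕ) (k : ℕ → ℕ) : Prop :=
  2 ≤ t ∧ t ≤ n - 1 ∧ k 1 = 1 ∧ k t = n ∧
  (∀ i : ℕ, 1 ≤ i → i < t → k i < k (i + 1)) ∧ k (t - 1) < n - 1

/-- The successor rule `Ψ₁` of Theorem 3.2. -/
noncomputable def Psi1Rule {n : ℕ} (t : ℕ) (k : ℕ → ℕ) (c : Fin n → F2) : F2 :=
  if (get c 1 = 0 ∧ IsCoNecklace (stTail c)) ∨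
     (get c 1 = 1 ∧ ∃ i : ℕ, 1 ≤ i ∧ i < t ∧ k i ≤ wt (stTail c) ∧
        wt (stTail c) < k (i + 1) ∧ IsNecklace (Lam^[k i] (stTail c)))
  then fPRR c + 1 else fPRR c

/-- The successor rule `Ψ₂` of Theorem 3.4. -/
noncomputable def Psi2Rule {n : ℕ} (k : ℕ) (c : Fin n → F2) : F2 :=
  if (get c 1 = 0 ∧ IsCoNecklace (stTail c)) ∨
     (get c 1 = 1 ∧ IsNecklace (Lam^[k] (stTail c)))
  then fPRR c + 1 else fPRR c

/-- `y_c = (c̄_1,…,c̄_{n-2}, 0) ∈ F₂^{n-1}`. -/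
noncomputable def yState {n : ℕ} (c : Fin n → F2) : Fin (n - 1) → F2 :=
  fun i => if (i : ℕ) < n - 2 then get c ((i : ℕ) + 1) + 1 else 0

/-- `w_c = (0, c_1,…,c_{n-2}) ∈ F₂^{n-1}`. -/
noncomputable def wState {n : ℕ} (c : Fin n → F2) : Fin (n - 1) → F2 :=
  fun i => if (i : ℕ) = 0 then 0 else get c (i : ℕ)

/-- The successor rule `Υ₁` of Theorem 4.2. -/
noncomputable def Ups1Rule {n : ℕ} (t : ℕ) (k : ℕ → ℕ) (c : Fin n → F2) : F2 :=
  if (get c (n - 1) = 1 ∧ IsCoNecklace (yState c)) ∨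
     (get c (n - 1) = 0 ∧ ∃ i : ℕ, 1 ≤ i ∧ i < t ∧
        k i ≤ wt (fun j => wState c j + 1) ∧ wt (fun j => wState c j + 1) < k (i + 1) ∧
        IsNecklace (Theta^[k i - 1] (wState c)))
  then fPRR c + 1 else fPRR c

/-- The successor rule `Υ₂` of Theorem 4.3. -/
noncomputable def Ups2Rule {n : ℕ} (k : ℕ) (c : Fin n → F2) : F2 :=
  if (get c (n - 1) = 1 ∧ IsCoNecklace (yState c)) ∨
     (get c (n - 1) = 0 ∧ IsNecklace (Theta^[k] (wState c)))
  then fPRR c + 1 else fPRR c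

/-- `x_c` of Theorem 4.1: `(0,c_1,…,c_{n-1})` if `c_{n-1}=0`,
and `(c̄_1,…,c̄_{n-2},0,c_1)` if `c_{n-1}=1`. -/
noncomputable def xState {n : ℕ} (c : Fin n → F2) : Fin n → F2 :=
  if get c (n - 1) = 0 then (fun i => if (i : ℕ) = 0 then 0 else c i)
  else fun i => if (i : ℕ) < n - 2 then get c ((i : ℕ) + 1) + 1
       else if (i : ℕ) = n - 2 then 0 else get c 1

/-!
Write `σ` for the state map of the PRR and `ĉ = conjSt c` for the conjugate of a state `c`. The
rule `Υ` differs from `σ` exactly on the conjugate pairs `{c, ĉ}` of which one member is the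
*exit* of its cycle: `sel P` on a PCR-type cycle `P`, and `(0, r̄₀, …, r̄ₙ₋₂)` on a CCR-type cycle
with representative `r`. Exchanging the successors of such a pair joins the two cycles.

Give a PCR-type cycle the potential `2 W(tail)` and a CCR-type cycle `2 W(r̄₀, …, r̄ₙ₋₂) + 1`,
where `W` orders words of length `n - 1` by their number of cyclic runs and then by their longest
arc of ones. Every cycle other than `{(1,…,1)}` is joined at its exit to a cycle of strictly
smaller potential, so the joins form a tree of cycles and `Υ` is a single cycle through all
`2ⁿ` states.
-/

open Function

namespace PureRunLength

lemma F2.add_one_add_one (x : F2) : x + 1 + 1 = x := by revert x; decide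

lemma F2.ne_add_one_iff {x y : F2} : x ≠ y + 1 ↔ x = y := by revert x y; decide

lemma F2.eq_zero_of_ne_one {x : F2} (h : x ≠ 1) : x = 0 := by revert x; decide

lemma F2.eq_zero_or_eq_one (x : F2) : x = 0 ∨ x = 1 := by revert x; decide

section Orbit

variable {α : Type*} {f : α → α} {x y z : α}

lemma inOrbit_refl (x : α) : inOrbit f x x := ⟨0, rfl⟩

lemma inOrbit_apply (x : α) : inOrbit f x (f x) := ⟨1, rfl⟩

lemma inOrbit_iterate (x : α) (k : ℕ) : inOrbit f x (f^[k] x) := ⟨k, rfl⟩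

lemma inOrbit_trans (h₁ : inOrbit f x y) (h₂ : inOrbit f y z) : inOrbit f x z := by
  obtain ⟨k, rfl⟩ := h₁
  obtain ⟨l, rfl⟩ := h₂
  exact ⟨l + k, iterate_add_apply f l k x⟩

lemma inOrbit_symm [Finite α] (hf : Injective f) (h : inOrbit f x y) : inOrbit f y x := by
  obtain ⟨k, rfl⟩ := h
  obtain ⟨p, hp, hpx⟩ := mem_periodicPts.mp (hf.mem_periodicPts x)
  refine ⟨p * k - k, ?_⟩
  rw [← iterate_add_apply, Nat.sub_add_cancel (Nat.le_mul_of_pos_left k hp)]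
  exact (hpx.mul_const k).eq

lemma orbit_eq_of_inOrbit [Finite α] (hf : Injective f) (h : inOrbit f x y) :
    orbit f x = orbit f y :=
  Set.ext fun _ => ⟨inOrbit_trans (inOrbit_symm hf h), inOrbit_trans h⟩

end Orbit

section CycleJoining

variable {α : Type*}

structure SwapsSuccessors (f g mate : α → α) (flip : α → Prop) : Prop where
  mate_mate : ∀ x, mate (mate x) = x
  flip_mate : ∀ x, flip (mate x) ↔ flip x
  apply_of_flip : ∀ x, flip x → g x = f (mate x)
  apply_of_not_flip : ∀ x, ¬ flip x → g x = f x

variable {f g mate : α → α} {flip : α → Prop}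

theorem SwapsSuccessors.injective (hg : SwapsSuccessors f g mate flip) (hf : Injective f) :
    Injective g := by
  have key : ∀ a b, flip a → g a = g b → a = b := by
    intro a b ha hab
    have hmate : mate a = (if flip b then mate b else b) := by
      split_ifs with hb
      · exact hf (by rw [← hg.apply_of_flip a ha, ← hg.apply_of_flip b hb, hab])
      · exact hf (by rw [← hg.apply_of_flip a ha, ← hg.apply_of_not_flip b hb, hab])
    split_ifs at hmate with hb
    · rw [← hg.mate_mate a, hmate, hg.mate_mate]
    · exact absurd (hmate ▸ (hg.flip_mate a).mpr ha) hb
  intro a b hab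
  by_cases ha : flip a
  · exact key a b ha hab
  by_cases hb : flip b
  · exact (key b a hb hab.symm).symm
  exact hf (by rw [← hg.apply_of_not_flip a ha, ← hg.apply_of_not_flip b hb, hab])

/-- `g` leaves the `f`-cycle of `x` only at flip states `y ≠ exit y`, into a cycle of larger `μ`
whose exit is `mate y`; by induction on decreasing `μ` it comes back from there to `f y`. -/
theorem SwapsSuccessors.reaches_exit [Finite α] (hg : SwapsSuccessors f g mate flip)
    (μ : α → ℕ) (exit : α → α) (hμ : ∀ x, μ (f x) = μ x) (hexit : ∀ x, exit (f x) = exit x)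
    (hexit_mem : ∀ x, inOrbit f x (exit x))
    (hchild : ∀ x, flip x → x ≠ exit x → μ x < μ (mate x) ∧ exit (mate x) = mate x) :
    ∀ x, inOrbit g x (exit x) := by
  obtain ⟨B, hB⟩ := (Set.finite_range μ).bddAbove
  have hμB : ∀ x, μ x ≤ B := fun x => hB ⟨x, rfl⟩
  suffices H : ∀ k x, B - μ x = k → inOrbit g x (exit x) from fun x => H _ x rfl
  intro k
  induction k using Nat.strong_induction_on with
  | _ k ih =>
  suffices H : ∀ d x, B - μ x = k → f^[d] x = exit x → inOrbit g x (exit x) by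
    intro x hx
    obtain ⟨d, hd⟩ := hexit_mem x
    exact H d x hx hd
  intro d
  induction d with
  | zero => intro x _ hd; exact hd ▸ inOrbit_refl x
  | succ d ihd =>
    intro x hk hd
    have hnext : inOrbit g (f x) (exit x) := by
      rw [← hexit x]
      exact ihd (f x) (by rw [hμ]; exact hk) (by rw [← iterate_succ_apply, hd, hexit])
    by_cases hx : flip x
    · by_cases hxe : x = exit x
      · exact hxe ▸ inOrbit_refl x
      obtain ⟨hlt, hmate⟩ := hchild x hx hxe
      have hsub : inOrbit g (f (mate x)) (mate x) := by
        have := ih (B - μ (mate x)) (by have := hμB (mate x); omega) (f (mate x)) (by rw [hμ])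
        rwa [hexit, hmate] at this
      have hback : g (mate x) = f x := by
        rw [hg.apply_of_flip _ ((hg.flip_mate x).mpr hx), hg.mate_mate]
      exact inOrbit_trans ⟨1, hg.apply_of_flip x hx⟩
        (inOrbit_trans hsub (inOrbit_trans ⟨1, hback⟩ hnext))
    · exact inOrbit_trans ⟨1, hg.apply_of_not_flip x hx⟩ hnext

theorem SwapsSuccessors.reaches_root [Finite α] (hg : SwapsSuccessors f g mate flip)
    (μ : α → ℕ) (exit : α → α) (hexit_reach : ∀ x, inOrbit g x (exit x)) (hμ : ∀ x, μ (f x) = μ x)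
    (root : α) (hparent : ∀ x, x ≠ root → flip (exit x) ∧ μ (mate (exit x)) < μ x) :
    ∀ x, inOrbit g x root := by
  intro x
  induction h : μ x using Nat.strong_induction_on generalizing x with
  | _ k ih =>
  by_cases hx : x = root
  · exact hx ▸ inOrbit_refl x
  obtain ⟨hflip, hlt⟩ := hparent x hx
  have hstep : inOrbit g (exit x) (f (mate (exit x))) := ⟨1, hg.apply_of_flip _ hflip⟩
  exact inOrbit_trans (hexit_reach x) (inOrbit_trans hstep (ih _ (by rw [hμ]; omega) _ rfl))

end CycleJoining

lemma get_of_lt {m : ℕ} (c : Fin m → F2) {j : ℕ} (h : j < m) : get c j = c ⟨j, h⟩ := dif_pos h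

lemma get_of_ge {m : ℕ} (c : Fin m → F2) {j : ℕ} (h : m ≤ j) : get c j = 0 := dif_neg (by omega)

lemma funext_get {m : ℕ} {a b : Fin m → F2} (h : ∀ j < m, get a j = get b j) : a = b :=
  funext fun i => by simpa only [get_of_lt _ i.isLt] using h i i.isLt

lemma exists_first_one {m : ℕ} {r : Fin m → F2} {j : ℕ} (hj : j < m) (h : get r j = 1) :
    ∃ Z < m, (∀ i < Z, get r i = 0) ∧ get r Z = 1 := by
  classical
  have hex : ∃ Z, Z < m ∧ get r Z = 1 := ⟨j, hj, h⟩
  obtain ⟨hZm, hZ⟩ := Nat.find_spec hex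
  refine ⟨_, hZm, fun i hi => F2.eq_zero_of_ne_one fun h1 => ?_, hZ⟩
  exact Nat.find_min hex hi ⟨by omega, h1⟩

section Lex

variable {m : ℕ}

/-- `lexLe` is the lexicographic order of `Mathlib`, read through `ZMod.val`. -/
def lexKey (v : Fin m → F2) : Lex (Fin m → ℕ) := toLex fun i => (v i).val

lemma lexKey_injective : Injective (lexKey (m := m)) := fun _ _ h =>
  funext fun i => ZMod.val_injective 2 (congrFun (toLex.injective h) i)

lemma lexLe_iff_lexKey_le {v w : Fin m → F2} : lexLe v w ↔ lexKey v ≤ lexKey w := by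
  constructor
  · intro h
    refine not_lt.mp fun ⟨j, hpre, hj⟩ => ?_
    have := h j fun i hi => (ZMod.val_injective 2 (hpre i hi)).symm
    exact absurd hj (not_lt.mpr this)
  · rintro h j hpre
    rcases h.lt_or_eq with ⟨i, hi, hlt⟩ | heq
    · rcases lt_trichotomy j i with hji | rfl | hij
      · exact (hi j hji).le
      · exact hlt.le
      · exact absurd (congrArg ZMod.val (hpre i hij)) hlt.ne
    · exact (congrFun (toLex.injective heq) j).le

lemma le_of_lexLe_of_leading_zeros {v w : Fin m → F2} (h : lexLe v w) {Z l : ℕ} (hZ : Z < m)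
    (hv : ∀ i < Z, get v i = 0) (hvZ : get v Z = 1) (hw : ∀ k < l, get w k = 0) : l ≤ Z := by
  by_contra! hlt
  have hpre : ∀ i : Fin m, i < ⟨Z, hZ⟩ → v i = w i := fun i hi => by
    have hi' : (i : ℕ) < Z := hi
    simpa only [get_of_lt _ i.isLt] using (hv i hi').trans (hw i (by omega)).symm
  have := h ⟨Z, hZ⟩ hpre
  rw [← get_of_lt v hZ, ← get_of_lt w hZ, hvZ, hw Z hlt] at this
  exact absurd this (by decide)

variable (f : (Fin m → F2) → (Fin m → F2))

lemma exists_mem_orbit_lexKey_le (x : Fin m → F2) :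
    ∃ r ∈ orbit f x, ∀ w ∈ orbit f x, lexKey r ≤ lexKey w := by
  classical
  obtain ⟨r, hr, hmin⟩ := Finset.exists_min_image (Finset.univ.filter (· ∈ orbit f x)) lexKey
    ⟨x, Finset.mem_filter.mpr ⟨Finset.mem_univ _, inOrbit_refl x⟩⟩
  exact ⟨r, by simpa using hr, fun w hw => hmin w (by simpa using hw)⟩

noncomputable def cycleRep (x : Fin m → F2) : Fin m → F2 :=
  (exists_mem_orbit_lexKey_le f x).choose

lemma cycleRep_mem (x : Fin m → F2) : cycleRep f x ∈ orbit f x :=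
  (exists_mem_orbit_lexKey_le f x).choose_spec.1

variable {f}

lemma isCycleRep_cycleRep (hf : Injective f) (x : Fin m → F2) :
    isCycleRep f (cycleRep f x) := fun w hw =>
  lexLe_iff_lexKey_le.mpr <| (exists_mem_orbit_lexKey_le f x).choose_spec.2 w <| by
    rwa [orbit_eq_of_inOrbit hf (cycleRep_mem f x)]

lemma cycleRep_eq (hf : Injective f) {x r : Fin m → F2} (hr : isCycleRep f r)
    (hmem : r ∈ orbit f x) : cycleRep f x = r := by
  have horb := orbit_eq_of_inOrbit hf hmem
  refine lexKey_injective (le_antisymm ?_ ?_)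
  · exact (exists_mem_orbit_lexKey_le f x).choose_spec.2 r hmem
  · exact lexLe_iff_lexKey_le.mp (hr _ (horb ▸ cycleRep_mem f x))

lemma cycleRep_apply (hf : Injective f) (x : Fin m → F2) : cycleRep f (f x) = cycleRep f x :=
  cycleRep_eq hf (isCycleRep_cycleRep hf x) <| by
    rw [← orbit_eq_of_inOrbit hf (inOrbit_apply x)]; exact cycleRep_mem f x

end Lex

section CyclicWord

variable {m : ℕ}

def HasOnesArc (w : Fin m → F2) (l : ℕ) : Prop :=
  ∃ s : ℕ, ∀ k < l, get w ((s + k) % m) = 1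

noncomputable def maxOnesArc (w : Fin m → F2) : ℕ :=
  Nat.findGreatest (HasOnesArc w) m

lemma le_maxOnesArc {w : Fin m → F2} {l : ℕ} (hl : l ≤ m) (h : HasOnesArc w l) :
    l ≤ maxOnesArc w :=
  Nat.le_findGreatest hl h

lemma hasOnesArc_maxOnesArc (w : Fin m → F2) : HasOnesArc w (maxOnesArc w) :=
  Nat.findGreatest_spec (Nat.zero_le m) ⟨0, fun _ hk => absurd hk (Nat.not_lt_zero _)⟩

lemma maxOnesArc_le {w : Fin m → F2} {Z : ℕ} (h : ∀ l, HasOnesArc w l → l ≤ Z) :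
    maxOnesArc w ≤ Z :=
  h _ (hasOnesArc_maxOnesArc w)

lemma maxOnesArc_le_self (w : Fin m → F2) : maxOnesArc w ≤ m := Nat.findGreatest_le m

def window (a : ℕ → F2) (q : ℕ) : Fin m → F2 := fun i => a (q + i)

noncomputable def changeAt (a : ℕ → F2) (j : ℕ) : ℕ := if a j ≠ a (j + 1) then 1 else 0

noncomputable def changes (a : ℕ → F2) (q l : ℕ) : ℕ := ∑ i ∈ Finset.range l, changeAt a (q + i)

variable {a : ℕ → F2}

lemma changeAt_add (ha : ∀ j, a (j + m) = a j + 1) (j : ℕ) :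
    changeAt a (j + m) = changeAt a j := by
  simp only [changeAt, show j + m + 1 = j + 1 + m by omega, ha, ne_eq, add_left_inj]

lemma changes_eq_changes_zero (ha : ∀ j, a (j + m) = a j + 1) (q : ℕ) :
    changes a q m = changes a 0 m := by
  induction q with
  | zero => rfl
  | succ q ih =>
    have h : changes a q m + changeAt a (q + m) = changes a (q + 1) m + changeAt a q := by
      unfold changes
      rw [← Finset.sum_range_succ (fun i => changeAt a (q + i)), Finset.sum_range_succ',
        Nat.add_zero]
      congr 1
      exact Finset.sum_congr rfl fun i _ => by rw [Nat.add_right_comm, Nat.add_assoc]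
    rw [changeAt_add ha] at h
    omega

variable [NeZero m]

lemma val_add_one (i : Fin m) : ((i + 1 : Fin m) : ℕ) = ((i : ℕ) + 1) % m := by
  rw [Fin.val_add, Fin.val_one', Nat.add_mod_mod]

lemma rot_one_eq (w : Fin m → F2) : rot 1 w = fun i => w (i + 1) :=
  funext fun i => congrArg w (Fin.ext (val_add_one i).symm)

noncomputable def cyclicRuns (w : Fin m → F2) : ℕ :=
  ∑ i : Fin m, if w i ≠ w (i + 1) then 1 else 0

lemma cyclicRuns_rot_one (w : Fin m → F2) : cyclicRuns (rot 1 w) = cyclicRuns w := by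
  rw [rot_one_eq]
  exact Equiv.sum_comp (Equiv.addRight 1) fun i => if w i ≠ w (i + 1) then 1 else 0

lemma get_rot_one (w : Fin m → F2) (j : ℕ) : get (rot 1 w) (j % m) = get w ((j + 1) % m) := by
  have hm := NeZero.pos m
  rw [get_of_lt _ (Nat.mod_lt _ hm), get_of_lt _ (Nat.mod_lt _ hm)]
  exact congrArg w (Fin.ext (Nat.mod_add_mod j m 1))

lemma hasOnesArc_rot_one (w : Fin m → F2) (l : ℕ) : HasOnesArc (rot 1 w) l ↔ HasOnesArc w l := by
  constructor
  · rintro ⟨s, hs⟩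
    refine ⟨s + 1, fun k hk => ?_⟩
    rw [← hs k hk, get_rot_one, Nat.add_right_comm]
  · rintro ⟨s, hs⟩
    refine ⟨s + (m - 1), fun k hk => ?_⟩
    rw [get_rot_one, ← hs k hk, show s + (m - 1) + k + 1 = s + k + m by
      have := NeZero.pos m; omega, Nat.add_mod_right]

lemma maxOnesArc_rot_one (w : Fin m → F2) : maxOnesArc (rot 1 w) = maxOnesArc w := by
  unfold maxOnesArc
  congr 1
  exact funext fun l => propext (hasOnesArc_rot_one w l)

lemma exists_start_of_hasOnesArc {w : Fin m → F2} (hlast : get w (m - 1) = 0) {l : ℕ}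
    (h : HasOnesArc w l) : ∃ s, s + l ≤ m - 1 ∧ ∀ k < l, get w (s + k) = 1 := by
  obtain ⟨s, hs⟩ := h
  have hm := NeZero.pos m
  have hsm := Nat.mod_lt s hm
  have hfit : s % m + l ≤ m - 1 := by
    by_contra! hc
    have := hs (m - 1 - s % m) (by omega)
    rw [← Nat.mod_add_mod, show s % m + (m - 1 - s % m) = m - 1 by omega,
      Nat.mod_eq_of_lt (by omega), hlast] at this
    exact absurd this (by decide)
  refine ⟨s % m, hfit, fun k hk => ?_⟩
  have := hs k hk
  rwa [← Nat.mod_add_mod, Nat.mod_eq_of_lt (show s % m + k < m by omega)] at this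

lemma maxOnesArc_lt {w : Fin m → F2} {j : ℕ} (hj : j < m) (h0 : get w j = 0) :
    maxOnesArc w < m := by
  refine lt_of_le_of_ne (maxOnesArc_le_self w) fun heq => ?_
  obtain ⟨s, hs⟩ := hasOnesArc_maxOnesArc w
  rw [heq] at hs
  have := hs ((j + m - s % m) % m) (Nat.mod_lt _ (NeZero.pos m))
  rw [← Nat.mod_add_mod, Nat.add_mod_mod, show s % m + (j + m - s % m) = j + m by
    have := Nat.mod_lt s (NeZero.pos m); omega, Nat.add_mod_right, Nat.mod_eq_of_lt hj,
    h0] at this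
  exact absurd this (by decide)

lemma cyclicRuns_window (a : ℕ → F2) (q : ℕ) :
    cyclicRuns (window (m := m) a q) =
      changes a q (m - 1) + if a (q + (m - 1)) ≠ a q then 1 else 0 := by
  have hm := NeZero.pos m
  let g : ℕ → ℕ := fun i => if a (q + i) ≠ a (q + (i + 1) % m) then 1 else 0
  have hg : ∀ i : Fin m, (if window a q i ≠ window a q (i + 1) then 1 else 0) = g i := by
    intro i; simp only [window, val_add_one, g]
  rw [cyclicRuns, Fintype.sum_congr _ _ hg, Fin.sum_univ_eq_sum_range g,
    show m = (m - 1) + 1 by omega, Finset.sum_range_succ, Nat.add_sub_cancel, changes]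
  congr 1
  · refine Finset.sum_congr rfl fun i hi => ?_
    rw [Finset.mem_range] at hi
    simp only [g, changeAt, Nat.add_assoc]
    rw [Nat.mod_eq_of_lt (by omega)]
  · simp only [g, Nat.sub_add_cancel hm, Nat.mod_self, Nat.add_zero]

/-- For an antiperiodic sequence all windows have `D ± 1` runs, `D` the number of changes
per half period: `D - 1` when the window begins and ends alike, `D + 1` otherwise. -/
lemma cyclicRuns_window_add (ha : ∀ j, a (j + m) = a j + 1) (q : ℕ) :
    cyclicRuns (window (m := m) a q) + (if a (q + (m - 1)) = a q then 2 else 0) =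
      changes a 0 m + 1 := by
  have hm := NeZero.pos m
  have hsplit : changes a q m = changes a q (m - 1) + changeAt a (q + (m - 1)) := by
    conv_lhs => rw [← Nat.sub_add_cancel hm]
    exact Finset.sum_range_succ _ _
  have hlast : changeAt a (q + (m - 1)) = if a (q + (m - 1)) = a q then 1 else 0 := by
    rw [changeAt, show q + (m - 1) + 1 = q + m by omega, ha]
    exact if_congr F2.ne_add_one_iff rfl rfl
  rw [cyclicRuns_window, ← changes_eq_changes_zero ha q, hsplit, hlast]
  by_cases h : a (q + (m - 1)) = a q <;> simp [h]

/-- Orders words by their runs first and by their longest arc of ones (reversed) second, as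
`m - maxOnesArc w ≤ m`. -/
noncomputable def runsWeight (w : Fin m → F2) : ℕ := (m + 1) * cyclicRuns w + (m - maxOnesArc w)

lemma runsWeight_rot_one (w : Fin m → F2) : runsWeight (rot 1 w) = runsWeight w := by
  rw [runsWeight, runsWeight, cyclicRuns_rot_one, maxOnesArc_rot_one]

lemma runsWeight_lt_of_cyclicRuns_lt {u v : Fin m → F2} (h : cyclicRuns u < cyclicRuns v) :
    runsWeight u < runsWeight v := by
  have : (m + 1) * cyclicRuns u + (m + 1) ≤ (m + 1) * cyclicRuns v := by
    rw [← Nat.mul_succ]; exact Nat.mul_le_mul_left _ h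
  unfold runsWeight
  omega

lemma runsWeight_lt_of_maxOnesArc_lt {u v : Fin m → F2} (h : cyclicRuns u = cyclicRuns v)
    (hlt : maxOnesArc v < maxOnesArc u) : runsWeight u < runsWeight v := by
  have := maxOnesArc_le_self u
  unfold runsWeight
  rw [h]
  omega

end CyclicWord

local notation "σ" => nextMap fPRR

section Register

variable {n : ℕ}

lemma stTail_apply (c : Fin n → F2) (i : Fin (n - 1)) : stTail c i = get c (i + 1) :=
  (get_of_lt c (by omega)).symm

lemma get_nextMap (ρ : (Fin n → F2) → F2) (c : Fin n → F2) {i : ℕ} (h : i + 1 < n) :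
    get (nextMap ρ c) i = get c (i + 1) := by
  rw [get_of_lt _ (by omega), get_of_lt _ h]
  exact dif_pos h

lemma get_nextMap_last (ρ : (Fin n → F2) → F2) (c : Fin n → F2) (hn : 0 < n) :
    get (nextMap ρ c) (n - 1) = ρ c := by
  rw [get_of_lt _ (by omega)]
  exact dif_neg (by simp only; omega)

lemma nextMap_fPRR_injective (hn : 2 ≤ n) : Injective (σ : (Fin n → F2) → (Fin n → F2)) := by
  intro a b hab
  have htail : ∀ j, 1 ≤ j → j < n → get a j = get b j := fun j h1 h2 => by
    have := congrArg (get · (j - 1)) hab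
    rwa [get_nextMap _ _ (by omega), get_nextMap _ _ (by omega), Nat.sub_add_cancel h1] at this
  have hlast : fPRR a = fPRR b := by
    have := congrArg (get · (n - 1)) hab
    simpa only [get_nextMap_last _ _ (by omega : 0 < n)] using this
  apply funext_get
  intro j hj
  rcases Nat.eq_zero_or_pos j with rfl | hj0
  · unfold fPRR at hlast
    rw [htail 1 le_rfl (by omega), htail (n - 1) (by omega) (by omega)] at hlast
    exact add_right_cancel (add_right_cancel hlast)
  · exact htail j hj0 hj

def IsPCR (c : Fin n → F2) : Prop := get c 0 = get c (n - 1)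

lemma isPCR_nextMap (hn : 2 ≤ n) (c : Fin n → F2) : IsPCR (σ c) ↔ IsPCR c := by
  unfold IsPCR fPRR
  rw [get_nextMap _ _ (by omega), get_nextMap_last _ _ (by omega)]
  generalize get c 0 = x, get c 1 = y, get c (n - 1) = z
  revert x y z; decide

lemma isPCR_iterate (hn : 2 ≤ n) (c : Fin n → F2) (k : ℕ) : IsPCR (σ^[k] c) ↔ IsPCR c := by
  induction k with
  | zero => rfl
  | succ k ih => rw [iterate_succ_apply', isPCR_nextMap hn, ih]

lemma isPCR_of_mem_orbit (hn : 2 ≤ n) {c w : Fin n → F2} (h : w ∈ orbit σ c) :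
    IsPCR w ↔ IsPCR c := by
  obtain ⟨k, rfl⟩ := h
  exact isPCR_iterate hn c k

lemma not_isPCR_iff {c : Fin n → F2} : ¬ IsPCR c ↔ get c (n - 1) = get c 0 + 1 := by
  unfold IsPCR
  generalize get c 0 = x, get c (n - 1) = y
  revert x y; decide

noncomputable def outSeq (c : Fin n → F2) (j : ℕ) : F2 := get (σ^[j] c) 0

lemma get_iterate_eq_outSeq (c : Fin n → F2) {i : ℕ} (hi : i < n) (p : ℕ) :
    get (σ^[p] c) i = outSeq c (p + i) := by
  induction i generalizing p with
  | zero => rfl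
  | succ i ih =>
    rw [← get_nextMap fPRR _ hi, ← iterate_succ_apply' σ, ih (by omega)]
    congr 1
    omega

lemma get_eq_outSeq (c : Fin n → F2) {i : ℕ} (hi : i < n) : get c i = outSeq c i := by
  simpa using get_iterate_eq_outSeq c hi 0

lemma outSeq_add_of_not_isPCR (hn : 2 ≤ n) {c : Fin n → F2} (hc : ¬ IsPCR c) (j : ℕ) :
    outSeq c (j + (n - 1)) = outSeq c j + 1 := by
  have := not_isPCR_iff.mp (mt (isPCR_iterate hn c j).mp hc)
  rwa [get_iterate_eq_outSeq c (by omega), get_iterate_eq_outSeq c (by omega),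
    Nat.add_zero] at this

lemma iterate_n_eq_xState (hn : 3 ≤ n) {c : Fin n → F2} (hc : ¬ IsPCR c)
    (hl : get c (n - 1) = 1) : σ^[n] c = xState c := by
  have hcompl := outSeq_add_of_not_isPCR (by omega) hc
  apply funext_get
  intro j hj
  rw [get_iterate_eq_outSeq c hj, xState, if_neg (by rw [hl]; decide), get_of_lt _ hj]
  simp only
  split_ifs with h1 h2
  · rw [show n + j = (j + 1) + (n - 1) by omega, hcompl, ← get_eq_outSeq c (by omega)]
  · rw [show n + j = (n - 1) + (n - 1) by omega, hcompl, ← get_eq_outSeq c (by omega), hl]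
    decide
  · rw [show n + j = (1 + (n - 1)) + (n - 1) by omega, hcompl, hcompl,
      ← get_eq_outSeq c (by omega), F2.add_one_add_one]

lemma exists_mem_orbit_get_zero_eq_zero {v : Fin n → F2} (hv : v ≠ fun _ => 1) :
    ∃ w ∈ orbit σ v, get w 0 = 0 := by
  by_contra! h
  refine hv (funext_get fun j hj => ?_)
  have := h _ (inOrbit_iterate v j)
  rw [get_iterate_eq_outSeq v (by omega), Nat.add_zero, ← get_eq_outSeq v hj] at this
  rw [get_of_lt (fun _ => (1 : F2)) hj]
  revert this; generalize get v j = y; revert y; decide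

lemma get_stTail (c : Fin n → F2) {j : ℕ} (hj : j < n - 1) : get (stTail c) j = get c (j + 1) := by
  rw [get_of_lt _ hj, stTail_apply]

lemma stTail_iterate_eq_window (c : Fin n → F2) (p : ℕ) :
    stTail (σ^[p] c) = window (outSeq c) (p + 1) := by
  funext i
  rw [stTail_apply, get_iterate_eq_outSeq c (by omega), window, Nat.add_right_comm, Nat.add_assoc]

lemma fPRR_of_isPCR {c : Fin n → F2} (hc : IsPCR c) : fPRR c = get c 1 := by
  rw [fPRR, ← hc]
  generalize get c 0 = x, get c 1 = y
  revert x y; decide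

lemma stTail_nextMap_of_isPCR (hn : 2 ≤ n) {c : Fin n → F2} (hc : IsPCR c) :
    stTail (σ c) = rot 1 (stTail c) := by
  funext i
  have hi := i.isLt
  rw [stTail_apply, rot, stTail_apply]
  simp only
  rcases Nat.lt_or_ge ((i : ℕ) + 1) (n - 1) with h | h
  · rw [get_nextMap _ _ (by omega), Nat.mod_eq_of_lt h]
  · rw [show (i : ℕ) + 1 = n - 1 by omega, Nat.mod_self, get_nextMap_last _ _ (by omega),
      fPRR_of_isPCR hc]

/-- For the representative of a CCR-type cycle, the tail of the states of the PCR-type cycle it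
is joined to. -/
noncomputable def complInit (r : Fin n → F2) : Fin (n - 1) → F2 := fun i => get r i + 1

lemma complInit_eq_window (hn : 2 ≤ n) {r : Fin n → F2} (hr : ¬ IsPCR r) :
    complInit r = window (outSeq r) (n - 1) := by
  funext i
  rw [complInit, window, get_eq_outSeq r (by omega), add_comm (n - 1),
    outSeq_add_of_not_isPCR hn hr]

lemma cycleRep_head (hn : 2 ≤ n) {r : Fin n → F2} (hr : isCycleRep σ r) (hccr : ¬ IsPCR r) :
    get r 0 = 0 := by
  have hne : r ≠ fun _ => 1 := by
    rintro rfl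
    exact hccr (by rw [IsPCR, get_of_lt _ (by omega), get_of_lt _ (by omega)])
  obtain ⟨w, hw, hw0⟩ := exists_mem_orbit_get_zero_eq_zero hne
  refine F2.eq_zero_of_ne_one fun h1 => ?_
  have := le_of_lexLe_of_leading_zeros (hr w hw) (by omega : 0 < n)
    (fun i hi => absurd hi (Nat.not_lt_zero i)) h1 (l := 1) fun k hk => by
      rwa [Nat.lt_one_iff.mp hk]
  omega

lemma cycleRep_last (hn : 2 ≤ n) {r : Fin n → F2} (hr : isCycleRep σ r) (hccr : ¬ IsPCR r) :
    get r (n - 1) = 1 := by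
  rw [not_isPCR_iff.mp hccr, cycleRep_head hn hr hccr]; rfl

lemma cycleRep_secondLast (hn : 2 ≤ n) {r : Fin n → F2} (hr : isCycleRep σ r)
    (hccr : ¬ IsPCR r) : get r (n - 2) = 0 := by
  have hcompl := outSeq_add_of_not_isPCR hn hccr
  -- `u` is the predecessor of `r`, since `σ^[n - 1]` complements the states of a CCR-type cycle
  set u := σ^[(n - 2) + (n - 1)] r
  have hu0 : get u 0 = get r (n - 2) + 1 := by
    rw [get_iterate_eq_outSeq r (by omega), Nat.add_zero, hcompl, ← get_eq_outSeq r (by omega)]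
  have hu : ∀ j, 1 ≤ j → j < n → get u j = get r (j - 1) := fun j h1 h2 => by
    rw [get_iterate_eq_outSeq r h2, show n - 2 + (n - 1) + j = j - 1 + (n - 1) + (n - 1) by omega,
      hcompl, hcompl, ← get_eq_outSeq r (by omega), F2.add_one_add_one]
  refine F2.eq_zero_of_ne_one fun h1 => ?_
  obtain ⟨Z, hZn, hZ0, hZ1⟩ := exists_first_one (by omega : n - 1 < n) (cycleRep_last hn hr hccr)
  have := le_of_lexLe_of_leading_zeros (hr u (inOrbit_iterate r _)) hZn hZ0 hZ1 (l := Z + 1)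
    fun k hk => by
      rcases Nat.eq_zero_or_pos k with rfl | hk0
      · rw [hu0, h1]; rfl
      · rw [hu k hk0 (by omega), hZ0 _ (by omega)]
  omega

lemma cycleRep_shape (hn : 2 ≤ n) {x : Fin n → F2} (hx : ¬ IsPCR x) :
    get (cycleRep σ x) 0 = 0 ∧ get (cycleRep σ x) (n - 2) = 0 ∧ get (cycleRep σ x) (n - 1) = 1 := by
  have hr := isCycleRep_cycleRep (nextMap_fPRR_injective hn) x
  have hccr := mt (isPCR_of_mem_orbit hn (cycleRep_mem σ x)).mp hx
  exact ⟨cycleRep_head hn hr hccr, cycleRep_secondLast hn hr hccr, cycleRep_last hn hr hccr⟩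

/-- A run of ones in the tail of `x` reappears, complemented, as leading zeros of a later state;
the lexicographically least state therefore has at least as many leading zeros. -/
lemma maxOnesArc_stTail_lt (hn : 3 ≤ n) [NeZero (n - 1)] {x : Fin n → F2} (hx : ¬ IsPCR x)
    (hx1 : get x 1 = 0) (hxl : get x (n - 1) = 0) :
    maxOnesArc (stTail x) < maxOnesArc (complInit (cycleRep σ x)) := by
  set r := cycleRep σ x
  have hσ := nextMap_fPRR_injective (n := n) (by omega)
  have hr := isCycleRep_cycleRep hσ x
  have hxr : x ∈ orbit σ r := inOrbit_symm hσ (cycleRep_mem σ x)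
  obtain ⟨-, hr2, hrl⟩ := cycleRep_shape (by omega) hx
  obtain ⟨Z, hZn, hZ0, hZ1⟩ := exists_first_one (by omega : n - 1 < n) hrl
  have hupper : maxOnesArc (stTail x) ≤ Z := maxOnesArc_le fun l hl => by
    obtain ⟨s, hsl, hs⟩ := exists_start_of_hasOnesArc
      (by rw [get_stTail _ (by omega), show n - 1 - 1 + 1 = n - 1 by omega, hxl]) hl
    refine le_of_lexLe_of_leading_zeros (hr _ (inOrbit_trans hxr
      (inOrbit_iterate x (s + 1 + (n - 1))))) hZn hZ0 hZ1 fun k hk => ?_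
    have := hs k hk
    rw [get_stTail _ (by omega), get_eq_outSeq x (by omega)] at this
    rw [get_iterate_eq_outSeq x (by omega), Nat.add_right_comm, outSeq_add_of_not_isPCR
      (by omega) hx, Nat.add_right_comm, Nat.add_assoc, ← Nat.add_assoc, this]
    rfl
  have hcap : maxOnesArc (stTail x) < n - 1 :=
    maxOnesArc_lt (j := 0) (by omega) (by rw [get_stTail _ (by omega), hx1])
  have hlower : HasOnesArc (complInit r) (min (Z + 1) (n - 1)) := by
    refine ⟨n - 2, fun k hk => ?_⟩
    rcases Nat.eq_zero_or_pos k with rfl | hk0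
    · rw [Nat.add_zero, Nat.mod_eq_of_lt (by omega), get_of_lt _ (by omega), complInit, hr2]
      rfl
    · rw [show n - 2 + k = (k - 1) + (n - 1) by omega, Nat.add_mod_right,
        Nat.mod_eq_of_lt (by omega), get_of_lt _ (by omega), complInit]
      simp only
      rw [hZ0 _ (by omega)]
      rfl
  have := le_maxOnesArc (min_le_right _ _) hlower
  omega

/-- The CCR-type cycle through `x` has lower potential than the PCR-type cycle through
`conjSt x`. -/
lemma runsWeight_complInit_cycleRep_lt (hn : 3 ≤ n) [NeZero (n - 1)] {x : Fin n → F2}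
    (hx0 : get x 0 = 1) (hxl : get x (n - 1) = 0) :
    runsWeight (complInit (cycleRep σ x)) < runsWeight (stTail x) := by
  set r := cycleRep σ x
  have hσ := nextMap_fPRR_injective (n := n) (by omega)
  have hx : ¬ IsPCR x := by rw [IsPCR, hx0, hxl]; decide
  have hccr : ¬ IsPCR r := mt (isPCR_of_mem_orbit (by omega) (cycleRep_mem σ x)).mp hx
  obtain ⟨hr0, hr2, -⟩ := cycleRep_shape (by omega) hx
  obtain ⟨p, hp⟩ := inOrbit_symm hσ (cycleRep_mem σ x)
  have hanti : ∀ j, outSeq r (j + (n - 1)) = outSeq r j + 1 :=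
    outSeq_add_of_not_isPCR (by omega) hccr
  have htail := cyclicRuns_window_add hanti (p + 1)
  have hcompl := cyclicRuns_window_add hanti (n - 1)
  rw [← stTail_iterate_eq_window, hp, show p + 1 + (n - 1 - 1) = p + (n - 1) by omega,
    ← get_iterate_eq_outSeq r (by omega), ← get_iterate_eq_outSeq r (by omega), hp, hxl] at htail
  have hend : outSeq r (n - 1 + (n - 1 - 1)) = 1 := by
    rw [show n - 1 + (n - 1 - 1) = n - 2 + (n - 1) by omega, hanti, ← get_eq_outSeq r (by omega),
      hr2]
    rfl
  have hstart : outSeq r (n - 1) = 1 := by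
    rw [← Nat.zero_add (n - 1), hanti, ← get_eq_outSeq r (by omega), hr0]
    rfl
  -- the tail of `x` starts with `x₁` and ends with `0`, `complInit r` starts and ends with `1`
  rw [← complInit_eq_window (by omega) hccr, hend, hstart, if_pos rfl] at hcompl
  rcases F2.eq_zero_or_eq_one (get x 1) with hx1 | hx1
  · rw [hx1, if_pos rfl] at htail
    exact runsWeight_lt_of_maxOnesArc_lt (by omega) (maxOnesArc_stTail_lt hn hx hx1 hxl)
  · rw [hx1, if_neg (by decide)] at htail
    exact runsWeight_lt_of_cyclicRuns_lt (by omega)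

lemma get_conjSt_zero (c : Fin n → F2) (hn : 0 < n) : get (conjSt c) 0 = get c 0 + 1 := by
  rw [get_of_lt _ hn, get_of_lt _ hn]; exact if_pos rfl

lemma get_conjSt_of_ne_zero (c : Fin n → F2) {j : ℕ} (hj : j ≠ 0) :
    get (conjSt c) j = get c j := by
  rcases Nat.lt_or_ge j n with hjn | hjn
  · rw [get_of_lt _ hjn, get_of_lt _ hjn]; exact if_neg hj
  · rw [get_of_ge _ hjn, get_of_ge _ hjn]

lemma conjSt_conjSt (c : Fin n → F2) : conjSt (conjSt c) = c := by
  funext i; unfold conjSt; split_ifs <;> simp [add_assoc, show (1 : F2) + 1 = 0 from rfl]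

lemma stTail_conjSt (c : Fin n → F2) : stTail (conjSt c) = stTail c := by
  funext i; simp [stTail_apply, get_conjSt_of_ne_zero]

lemma eq_of_stTail_eq {a b : Fin n → F2} (h : stTail a = stTail b) {j : ℕ} (hj : j ≠ 0) :
    get a j = get b j := by
  rcases Nat.lt_or_ge j n with hjn | hjn
  · obtain ⟨i, rfl⟩ := Nat.exists_eq_add_one_of_ne_zero hj
    rw [← get_stTail a (by omega), ← get_stTail b (by omega), h]
  · rw [get_of_ge _ hjn, get_of_ge _ hjn]

lemma xState_eq_of_stTail_eq (hn : 2 ≤ n) {a b : Fin n → F2} (h : stTail a = stTail b) :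
    xState a = xState b := by
  have hl := eq_of_stTail_eq h (show n - 1 ≠ 0 by omega)
  unfold xState
  rw [hl]
  split_ifs
  · funext i; split_ifs with hi
    · rfl
    · simpa only [get_of_lt _ i.isLt] using eq_of_stTail_eq h hi
  · funext i; simp only [eq_of_stTail_eq h (Nat.succ_ne_zero _)]

lemma fPRR_conjSt (hn : 2 ≤ n) (c : Fin n → F2) : fPRR (conjSt c) = fPRR c + 1 := by
  simp only [fPRR, get_conjSt_zero c (by omega), get_conjSt_of_ne_zero c one_ne_zero,
    get_conjSt_of_ne_zero c (show n - 1 ≠ 0 by omega)]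
  ring

lemma nextMap_eq_nextMap {ρ ρ' : (Fin n → F2) → F2} {a b : Fin n → F2}
    (h : stTail a = stTail b) (hρ : ρ a = ρ' b) : nextMap ρ a = nextMap ρ' b := by
  funext i
  unfold nextMap
  split_ifs with hi
  · simpa only [get_of_lt _ hi] using eq_of_stTail_eq h (Nat.succ_ne_zero i)
  · exact hρ

def FlipState (sel : (Fin n → F2) → (Fin n → F2)) (c : Fin n → F2) : Prop :=
  (get c (n - 1) = 0 ∧ xState c = sel (xState c)) ∨
    (get c (n - 1) = 1 ∧ isCycleRep σ (xState c))

/-- The successor rule `Υ`. -/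
noncomputable def upsRule (sel : (Fin n → F2) → (Fin n → F2)) (c : Fin n → F2) : F2 :=
  if (get c (n - 1) = 0 ∧ xState c = sel (xState c)) ∨
     (get c (n - 1) = 1 ∧ isCycleRep σ (xState c))
  then fPRR c + 1 else fPRR c

lemma swapsSuccessors_upsRule (hn : 2 ≤ n) (sel : (Fin n → F2) → (Fin n → F2)) :
    SwapsSuccessors σ (nextMap (upsRule sel)) conjSt (FlipState sel) where
  mate_mate := conjSt_conjSt
  flip_mate c := by
    unfold FlipState
    rw [xState_eq_of_stTail_eq hn (stTail_conjSt c),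
      get_conjSt_of_ne_zero c (show n - 1 ≠ 0 by omega)]
  apply_of_flip c h := nextMap_eq_nextMap (stTail_conjSt c).symm
    (by rw [fPRR_conjSt hn]; exact if_pos h)
  apply_of_not_flip c h := nextMap_eq_nextMap rfl (if_neg h)

lemma xState_of_last_zero {c : Fin n → F2} (hl : get c (n - 1) = 0) :
    xState c = fun i : Fin n => if (i : ℕ) = 0 then 0 else c i :=
  if_pos hl

lemma xState_eq_self {c : Fin n → F2} (h0 : get c 0 = 0) (hl : get c (n - 1) = 0) :
    xState c = c := by
  rw [xState_of_last_zero hl]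
  funext i
  split_ifs with hi
  · rw [← h0, get_of_lt _ (by omega)]; exact congrArg c (Fin.ext hi.symm)
  · rfl

lemma xState_eq_conjSt {c : Fin n → F2} (h0 : get c 0 = 1) (hl : get c (n - 1) = 0) :
    xState c = conjSt c := by
  rw [xState_of_last_zero hl]
  funext i
  unfold conjSt
  split_ifs with hi
  · rw [← get_of_lt c i.isLt, hi, h0]; rfl
  · rfl

lemma get_xState_of_last_one (hn : 3 ≤ n) {c : Fin n → F2} (hl : get c (n - 1) = 1) :
    (∀ j < n - 2, get (xState c) j = get c (j + 1) + 1) ∧ get (xState c) (n - 2) = 0 ∧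
      get (xState c) (n - 1) = get c 1 := by
  have hxs : xState c = fun i : Fin n => if (i : ℕ) < n - 2 then get c ((i : ℕ) + 1) + 1
      else if (i : ℕ) = n - 2 then 0 else get c 1 := if_neg (by rw [hl]; decide)
  refine ⟨fun j hj => ?_, ?_, ?_⟩ <;> rw [hxs, get_of_lt _ (by omega)] <;> simp only
  · rw [if_pos hj]
  · rw [if_neg (by omega), if_pos trivial]
  · rw [if_neg (by omega), if_neg (by omega)]

/-- The state of the CCR-type cycle of `r` at which `Υ` leaves that cycle. -/
noncomputable def exitState (r : Fin n → F2) : Fin n → F2 :=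
  fun i => if (i : ℕ) = 0 then 0 else get r ((i : ℕ) - 1) + 1

lemma get_exitState_zero (r : Fin n → F2) (hn : 0 < n) : get (exitState r) 0 = 0 := by
  rw [get_of_lt _ hn]; exact if_pos rfl

lemma get_exitState {r : Fin n → F2} {j : ℕ} (hj0 : j ≠ 0) (hj : j < n) :
    get (exitState r) j = get r (j - 1) + 1 := by
  rw [get_of_lt _ hj]; exact if_neg hj0

lemma stTail_exitState (r : Fin n → F2) : stTail (exitState r) = complInit r := by
  funext i
  rw [stTail_apply, get_exitState (Nat.succ_ne_zero _) (by omega), Nat.succ_sub_one]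
  rfl

lemma xState_exitState (hn : 3 ≤ n) {r : Fin n → F2} (h0 : get r 0 = 0) (h2 : get r (n - 2) = 0)
    (hl : get r (n - 1) = 1) : xState (exitState r) = r := by
  obtain ⟨hlow, hmid, hlast⟩ := get_xState_of_last_one hn (c := exitState r)
    (by rw [get_exitState (by omega) (by omega), show n - 1 - 1 = n - 2 by omega, h2]; rfl)
  apply funext_get
  intro j hj
  rcases Nat.lt_or_ge j (n - 2) with hj2 | hj2
  · rw [hlow j hj2, get_exitState (by omega) (by omega), Nat.add_sub_cancel, F2.add_one_add_one]
  rcases Nat.lt_or_ge j (n - 1) with hj1 | hj1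
  · rw [show j = n - 2 by omega, hmid, h2]
  · rw [show j = n - 1 by omega, hlast, get_exitState one_ne_zero (by omega), Nat.sub_self, hl,
      h0]
    rfl

lemma exitState_xState (hn : 3 ≤ n) {c : Fin n → F2} (h0 : get c 0 = 0) (hl : get c (n - 1) = 1) :
    exitState (xState c) = c := by
  obtain ⟨hlow, hmid, -⟩ := get_xState_of_last_one hn hl
  apply funext_get
  intro j hj
  rcases Nat.eq_zero_or_pos j with rfl | hj0
  · rw [get_exitState_zero _ hj, h0]
  rw [get_exitState (by omega) hj]
  rcases Nat.lt_or_ge j (n - 1) with hj1 | hj1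
  · rw [hlow _ (by omega), Nat.sub_add_cancel hj0, F2.add_one_add_one]
  · rw [show j = n - 1 by omega, show n - 1 - 1 = n - 2 by omega, hmid, hl]; rfl

lemma cycleRep_eq_xState (hn : 3 ≤ n) {c : Fin n → F2} (h0 : get c 0 = 0)
    (hl : get c (n - 1) = 1) (hrep : isCycleRep σ (xState c)) : cycleRep σ c = xState c :=
  cycleRep_eq (nextMap_fPRR_injective (by omega)) hrep
    ⟨n, iterate_n_eq_xState hn (by rw [IsPCR, h0, hl]; decide) hl⟩

section Joining

/-- PCR-type cycles get even and CCR-type cycles odd potentials, so that a cycle and the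
cycle it is joined to never tie. -/
noncomputable def potential [NeZero (n - 1)] (x : Fin n → F2) : ℕ :=
  if IsPCR x then 2 * runsWeight (stTail x) else 2 * runsWeight (complInit (cycleRep σ x)) + 1

lemma potential_of_isPCR [NeZero (n - 1)] {x : Fin n → F2} (hx : IsPCR x) :
    potential x = 2 * runsWeight (stTail x) := if_pos hx

lemma potential_of_not_isPCR [NeZero (n - 1)] {x : Fin n → F2} (hx : ¬ IsPCR x) :
    potential x = 2 * runsWeight (complInit (cycleRep σ x)) + 1 := if_neg hx

lemma potential_nextMap (hn : 2 ≤ n) [NeZero (n - 1)] (x : Fin n → F2) :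
    potential (σ x) = potential x := by
  by_cases hx : IsPCR x
  · rw [potential_of_isPCR ((isPCR_nextMap hn x).mpr hx), potential_of_isPCR hx,
      stTail_nextMap_of_isPCR hn hx, runsWeight_rot_one]
  · rw [potential_of_not_isPCR (mt (isPCR_nextMap hn x).mp hx), potential_of_not_isPCR hx,
      cycleRep_apply (nextMap_fPRR_injective hn)]

lemma potential_of_mem_orbit (hn : 2 ≤ n) [NeZero (n - 1)] {x y : Fin n → F2}
    (h : y ∈ orbit σ x) : potential y = potential x := by
  obtain ⟨k, rfl⟩ := h
  induction k with
  | zero => rfl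
  | succ k ih => rw [iterate_succ_apply', potential_nextMap hn, ih]

variable (sel : (Fin n → F2) → (Fin n → F2))

noncomputable def exitOf (x : Fin n → F2) : Fin n → F2 :=
  if IsPCR x then sel x else exitState (cycleRep σ x)

variable {sel}

lemma exitOf_nextMap (hn : 2 ≤ n) (hconst : ∀ v w, inOrbit σ v w → sel v = sel w)
    (x : Fin n → F2) : exitOf sel (σ x) = exitOf sel x := by
  by_cases hx : IsPCR x
  · rw [exitOf, exitOf, if_pos ((isPCR_nextMap hn x).mpr hx), if_pos hx,
      hconst x _ (inOrbit_apply x)]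
  · rw [exitOf, exitOf, if_neg (mt (isPCR_nextMap hn x).mp hx), if_neg hx,
      cycleRep_apply (nextMap_fPRR_injective hn)]

lemma exitState_last (hn : 3 ≤ n) {x : Fin n → F2} (hx : ¬ IsPCR x) :
    get (exitState (cycleRep σ x)) (n - 1) = 1 := by
  rw [get_exitState (by omega) (by omega), show n - 1 - 1 = n - 2 by omega,
    (cycleRep_shape (by omega) hx).2.1]
  rfl

lemma xState_exitState_cycleRep (hn : 3 ≤ n) {x : Fin n → F2} (hx : ¬ IsPCR x) :
    xState (exitState (cycleRep σ x)) = cycleRep σ x :=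
  let ⟨h0, h2, hl⟩ := cycleRep_shape (by omega) hx
  xState_exitState hn h0 h2 hl

lemma exitOf_mem (hn : 3 ≤ n) (hmem : ∀ v, sel v ∈ orbit σ v) (x : Fin n → F2) :
    inOrbit σ x (exitOf sel x) := by
  by_cases hx : IsPCR x
  · rw [exitOf, if_pos hx]; exact hmem x
  rw [exitOf, if_neg hx]
  have hσ := nextMap_fPRR_injective (n := n) (by omega)
  have hback : inOrbit σ (exitState (cycleRep σ x)) (cycleRep σ x) := by
    refine ⟨n, ?_⟩
    rw [iterate_n_eq_xState hn _ (exitState_last hn hx), xState_exitState_cycleRep hn hx]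
    rw [IsPCR, get_exitState_zero _ (by omega), exitState_last hn hx]
    decide
  exact inOrbit_trans (cycleRep_mem σ x) (inOrbit_symm hσ hback)

lemma potential_lt_conjSt (hn : 3 ≤ n) [NeZero (n - 1)] {x : Fin n → F2}
    (hflip : FlipState sel x) (hne : x ≠ exitOf sel x) :
    potential x < potential (conjSt x) ∧ exitOf sel (conjSt x) = conjSt x := by
  have h0' := get_conjSt_zero x (by omega)
  have hl' := get_conjSt_of_ne_zero x (show n - 1 ≠ 0 by omega)
  rcases F2.eq_zero_or_eq_one (get x (n - 1)) with hl | hl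
  · have hsel : xState x = sel (xState x) := by
      rcases hflip with ⟨-, h⟩ | ⟨h, -⟩
      · exact h
      · rw [hl] at h; exact absurd h (by decide)
    rcases F2.eq_zero_or_eq_one (get x 0) with h0 | h0
    · rw [xState_eq_self h0 hl] at hsel
      exact absurd (by rw [exitOf, if_pos (by rw [IsPCR, h0, hl]), ← hsel]) hne
    · rw [xState_eq_conjSt h0 hl] at hsel
      have hP : IsPCR (conjSt x) := by rw [IsPCR, h0', hl', h0, hl]; rfl
      refine ⟨?_, by rw [exitOf, if_pos hP, ← hsel]⟩
      rw [potential_of_not_isPCR (by rw [IsPCR, h0, hl]; decide), potential_of_isPCR hP,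
        stTail_conjSt]
      have := runsWeight_complInit_cycleRep_lt hn h0 hl
      omega
  · have hrep : isCycleRep σ (xState x) := by
      rcases hflip with ⟨h, -⟩ | ⟨-, h⟩
      · rw [hl] at h; exact absurd h (by decide)
      · exact h
    rcases F2.eq_zero_or_eq_one (get x 0) with h0 | h0
    · refine absurd ?_ hne
      rw [exitOf, if_neg (by rw [IsPCR, h0, hl]; decide), cycleRep_eq_xState hn h0 hl hrep,
        exitState_xState hn h0 hl]
    · have hc0 : get (conjSt x) 0 = 0 := by rw [h0', h0]; rfl
      have hcl : get (conjSt x) (n - 1) = 1 := by rw [hl', hl]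
      have hccr : ¬ IsPCR (conjSt x) := by rw [IsPCR, hc0, hcl]; decide
      rw [← xState_eq_of_stTail_eq (by omega) (stTail_conjSt x)] at hrep
      have hrx := cycleRep_eq_xState hn hc0 hcl hrep
      refine ⟨?_, by rw [exitOf, if_neg hccr, hrx, exitState_xState hn hc0 hcl]⟩
      rw [potential_of_isPCR (by rw [IsPCR, h0, hl]), potential_of_not_isPCR hccr, hrx,
        ← stTail_exitState, exitState_xState hn hc0 hcl, stTail_conjSt]
      omega

lemma flip_exitOf (hn : 3 ≤ n) [NeZero (n - 1)] (hmem : ∀ v, sel v ∈ orbit σ v)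
    (hconst : ∀ v w, inOrbit σ v w → sel v = sel w)
    (hval : ∀ v : Fin n → F2, v ≠ (fun _ => 1) →
      (∀ w ∈ orbit σ v, get w 0 = get w (n - 1)) → get (sel v) 0 = 0)
    {x : Fin n → F2} (hx : x ≠ fun _ => 1) :
    FlipState sel (exitOf sel x) ∧ potential (conjSt (exitOf sel x)) < potential x := by
  by_cases hP : IsPCR x
  · rw [exitOf, if_pos hP]
    have h0 : get (sel x) 0 = 0 :=
      hval x hx fun w hw => (isPCR_of_mem_orbit (by omega) hw).mpr hP
    have hPs : IsPCR (sel x) := (isPCR_of_mem_orbit (by omega) (hmem x)).mpr hP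
    have hl : get (sel x) (n - 1) = 0 := hPs ▸ h0
    have hc0 : get (conjSt (sel x)) 0 = 1 := by rw [get_conjSt_zero _ (by omega), h0]; rfl
    have hcl : get (conjSt (sel x)) (n - 1) = 0 := by
      rw [get_conjSt_of_ne_zero _ (show n - 1 ≠ 0 by omega), hl]
    refine ⟨Or.inl ⟨hl, ?_⟩, ?_⟩
    · rw [xState_eq_self h0 hl, ← hconst x _ (hmem x)]
    · rw [potential_of_not_isPCR (by rw [IsPCR, hc0, hcl]; decide),
        ← potential_of_mem_orbit (by omega) (hmem x), potential_of_isPCR hPs]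
      have := runsWeight_complInit_cycleRep_lt hn hc0 hcl
      rw [stTail_conjSt] at this
      omega
  · rw [exitOf, if_neg hP]
    refine ⟨Or.inr ⟨exitState_last hn hP, by
      rw [xState_exitState_cycleRep hn hP]
      exact isCycleRep_cycleRep (nextMap_fPRR_injective (by omega)) x⟩, ?_⟩
    rw [potential_of_isPCR, stTail_conjSt, stTail_exitState, potential_of_not_isPCR hP]
    · omega
    · rw [IsPCR, get_conjSt_zero _ (by omega), get_exitState_zero _ (by omega),
        get_conjSt_of_ne_zero _ (show n - 1 ≠ 0 by omega), exitState_last hn hP]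
      rfl

end Joining

end Register

end PureRunLength

open PureRunLength in
/-- the generic successor rule `Υ` (Theorem 4.1). Every PCR-type cycle other
than `{(1,…,1)}` contains a state whose first coordinate is `0`; for every choice `sel` of
such states (one per cycle) the rule generates a de Bruijn sequence. -/
theorem generic_rule_Ups (n : ℕ) (hn : 3 ≤ n)
    (sel : (Fin n → F2) → (Fin n → F2))
    (hmem : ∀ v, sel v ∈ orbit (nextMap (n := n) fPRR) v)
    (hconst : ∀ v w, inOrbit (nextMap (n := n) fPRR) v w → sel v = sel w)
    (hval : ∀ v : Fin n → F2, v ≠ (fun _ => 1) →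
      (∀ w ∈ orbit (nextMap (n := n) fPRR) v, get w 0 = get w (n - 1)) →
      get (sel v) 0 = 0) :
    (∀ v : Fin n → F2, v ≠ (fun _ => 1) →
      (∀ w ∈ orbit (nextMap (n := n) fPRR) v, get w 0 = get w (n - 1)) →
      ∃ w ∈ orbit (nextMap (n := n) fPRR) v, get w 0 = 0) ∧
    generatesDB (fun c : Fin n → F2 =>
      if (get c (n - 1) = 0 ∧ xState c = sel (xState c)) ∨
         (get c (n - 1) = 1 ∧ isCycleRep (nextMap (n := n) fPRR) (xState c))
      then fPRR c + 1 else fPRR c) := by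
  have : NeZero (n - 1) := ⟨by omega⟩
  have hg := swapsSuccessors_upsRule (by omega) sel
  have hexit := hg.reaches_exit potential (exitOf sel) (potential_nextMap (by omega))
    (exitOf_nextMap (by omega) hconst) (exitOf_mem hn hmem) fun _ => potential_lt_conjSt hn
  have hroot := hg.reaches_root potential (exitOf sel) hexit (potential_nextMap (by omega))
    (fun _ => 1) fun _ => flip_exitOf hn hmem hconst hval
  refine ⟨fun v hv _ => exists_mem_orbit_get_zero_eq_zero hv, fun x y => ?_⟩
  exact inOrbit_trans (hroot x)
    (inOrbit_symm (hg.injective (nextMap_fPRR_injective (by omega))) (hroot y))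
end

section
/- Let n ≥ 3 and let v = (v_0,…,v_{n-1}) ∈ F₂ⁿ satisfy v_0 = v_{n-1} = 1. Let P be the σ_PRR-orbit of v (a PCR-type cycle) and let C be the σ_PRR-orbit of the companion state ṽ = (v_0,…,v_{n-2}, 0). Then C is a CCR-type cycle distinct from P, and the cycle representative of C is lexicographically smaller than the cycle representative of P. -/
attribute [local instance] Classical.propDecidable

/-! Along a run of the pure run-length register the sum `c₀ + c_{n-1}` is invariant, because
the next state ends in the pair `(c₁, c₀ + c₁ + c_{n-1})`; so the cycle of `ṽ` is CCR-type.
Reading the output bits `s_k = (σᵏ c)₀`, this says `s_{k+n-1} = s_k + c₀ + c_{n-1}`: the orbit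
of `v` is periodic with period `n - 1`, and the orbit of `ṽ` is anti-periodic. Since `v` and `ṽ`
share their first `n - 1` bits, `σⁱ ṽ` and `σⁱ v` (for `i < n - 1`) agree below position
`n - 1 - i`, where they read `ṽ₀ + 1 = 0` and `v₀ = 1`. So every state of the cycle of `v` is
beaten by a state of the cycle of `ṽ`. -/

lemma get_of_lt {m : ℕ} (c : Fin m → F2) {i : ℕ} (hi : i < m) : get c i = c ⟨i, hi⟩ := dif_pos hi

lemma mem_orbit_self {α : Type*} (σ : α → α) (v : α) : v ∈ orbit σ v := ⟨0, rfl⟩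

lemma orbit_subset_of_mem {α : Type*} {σ : α → α} {v w : α} (hw : w ∈ orbit σ v) :
    orbit σ w ⊆ orbit σ v := by
  obtain ⟨k, rfl⟩ := hw
  rintro _ ⟨l, rfl⟩
  exact ⟨l + k, Function.iterate_add_apply σ l k v⟩

section Lexicographic

variable {m : ℕ}

/-- `ZMod 2` carries no order; `lexLe` is the `Pi.Lex` order of the values in `ℕ`. -/
def lexKey (v : Fin m → F2) : Lex (Fin m → ℕ) := toLex fun i => (v i).val

lemma lexKey_injective : Function.Injective (lexKey (m := m)) := fun _ _ h =>
  funext fun i => ZMod.val_injective 2 (congrFun h i)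

lemma lexLe_iff_lexKey_le {v w : Fin m → F2} : lexLe v w ↔ lexKey v ≤ lexKey w := by
  refine ⟨fun h => ?_, fun h j hj => Pi.apply_le_of_toLex h fun i hi => by simp [hj i hi]⟩
  by_contra! hlt
  obtain ⟨j, hj, hwv⟩ := hlt
  exact (h j fun i hi => ZMod.val_injective 2 (hj i hi).symm).not_gt hwv

lemma lexLt_iff_lexKey_lt {v w : Fin m → F2} : lexLt v w ↔ lexKey v < lexKey w :=
  (lexLe_iff_lexKey_le.and lexKey_injective.ne_iff.symm).trans lt_iff_le_and_ne.symm

lemma lexLt_of_lexLe_of_lexLt {u v w : Fin m → F2} (huv : lexLe u v) (hvw : lexLt v w) :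
    lexLt u w := by
  rw [lexLt_iff_lexKey_lt] at hvw ⊢
  exact (lexLe_iff_lexKey_le.mp huv).trans_lt hvw

lemma lexLt_of_get {v w : Fin m → F2} {j : ℕ} (hj : j < m) (hpre : ∀ i < j, get v i = get w i)
    (hv : get v j = 0) (hw : get w j = 1) : lexLt v w := by
  rw [lexLt_iff_lexKey_lt]
  refine ⟨⟨j, hj⟩, fun i hi => ?_, ?_⟩
  · have hvw := hpre i hi
    rw [get_of_lt v i.isLt, get_of_lt w i.isLt] at hvw
    simp [lexKey, hvw]
  · rw [get_of_lt v hj] at hv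
    rw [get_of_lt w hj] at hw
    simp [lexKey, hv, hw]

lemma exists_isCycleRep (σ : (Fin m → F2) → (Fin m → F2)) (v : Fin m → F2) :
    ∃ r ∈ orbit σ v, isCycleRep σ r ∧ ∀ w ∈ orbit σ v, lexLe r w := by
  obtain ⟨r, hr, hmin⟩ := (Finset.univ.filter (· ∈ orbit σ v)).exists_min_image lexKey
    ⟨v, by simpa using mem_orbit_self σ v⟩
  simp only [Finset.mem_filter, Finset.mem_univ, true_and] at hr hmin
  have hmin' : ∀ w ∈ orbit σ v, lexLe r w := fun w hw => lexLe_iff_lexKey_le.mpr (hmin w hw)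
  exact ⟨r, hr, fun w hw => hmin' w (orbit_subset_of_mem hr hw), hmin'⟩

end Lexicographic

section ShiftRegister

variable {n : ℕ}

lemma ext_get {c d : Fin n → F2} (h : ∀ i < n, get c i = get d i) : c = d :=
  funext fun i => by simpa [get_of_lt _ i.isLt] using h i i.isLt

lemma get_nextMap_of_lt (ρ : (Fin n → F2) → F2) (c : Fin n → F2) {i : ℕ} (hi : i + 1 < n) :
    get (nextMap ρ c) i = get c (i + 1) := by
  simp [get_of_lt _ hi, get_of_lt _ (by omega : i < n), nextMap, hi]

lemma get_nextMap_last (ρ : (Fin n → F2) → F2) (c : Fin n → F2) (hn : 0 < n) :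
    get (nextMap ρ c) (n - 1) = ρ c := by
  rw [get_of_lt _ (by omega : n - 1 < n)]
  exact dif_neg (by simp only; omega)

lemma get_iterate_nextMap (ρ : (Fin n → F2) → F2) (c : Fin n → F2) (k : ℕ) {i : ℕ}
    (hi : i < n) : get ((nextMap ρ)^[k] c) i = get ((nextMap ρ)^[k + i] c) 0 := by
  induction i generalizing k with
  | zero => rfl
  | succ i ih =>
    rw [← get_nextMap_of_lt ρ _ hi, ← Function.iterate_succ_apply' (nextMap ρ),
      ih (k + 1) (by omega), Nat.succ_add, Nat.add_succ]

end ShiftRegister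

section PureRunLength

variable {n : ℕ}

noncomputable def endSum (c : Fin n → F2) : F2 := get c 0 + get c (n - 1)

lemma endSum_nextMap_fPRR (hn : 2 ≤ n) (c : Fin n → F2) :
    endSum (nextMap fPRR c) = endSum c := by
  have hsum : ∀ a b x : F2, x + (a + x + b) = a + b := by decide
  rw [endSum, get_nextMap_of_lt _ _ (by omega), get_nextMap_last _ _ (by omega), fPRR,
    zero_add, hsum, endSum]

lemma endSum_iterate_nextMap_fPRR (hn : 2 ≤ n) (c : Fin n → F2) (k : ℕ) :
    endSum ((nextMap fPRR)^[k] c) = endSum c := by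
  induction k with
  | zero => rfl
  | succ k ih => rw [Function.iterate_succ_apply', endSum_nextMap_fPRR hn, ih]

lemma get_iterate_add_pred (hn : 2 ≤ n) (c : Fin n → F2) (k : ℕ) :
    get ((nextMap fPRR)^[k + (n - 1)] c) 0 = get ((nextMap fPRR)^[k] c) 0 + endSum c := by
  have hsum := endSum_iterate_nextMap_fPRR hn c k
  rw [endSum] at hsum
  rw [← get_iterate_nextMap _ _ _ (by omega), ← hsum, ← add_assoc, CharTwo.add_self_eq_zero,
    zero_add]

lemma isPeriodicPt_nextMap_fPRR (hn : 2 ≤ n) {c : Fin n → F2} (hc : endSum c = 0) :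
    Function.IsPeriodicPt (nextMap fPRR) (n - 1) c :=
  ext_get fun i hi => by
    rw [get_iterate_nextMap _ _ _ hi, add_comm, get_iterate_add_pred hn, hc, add_zero]
    simpa using (get_iterate_nextMap fPRR c 0 hi).symm

lemma get_compSt_of_lt (v : Fin n → F2) {i : ℕ} (hi : i < n - 1) :
    get (compSt v) i = get v i := by
  rw [get_of_lt _ (by omega), get_of_lt _ (by omega)]
  exact if_neg (by simp only; omega)

lemma endSum_compSt (hn : 2 ≤ n) (v : Fin n → F2) : endSum (compSt v) = endSum v + 1 := by
  simp only [endSum, get_of_lt _ (by omega : 0 < n), get_of_lt _ (by omega : n - 1 < n), compSt,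
    zero_add, if_neg (show ¬ 1 = n by omega), if_pos (show n - 1 + 1 = n by omega), add_assoc]

lemma lexLt_iterate_compSt (hn : 2 ≤ n) {v : Fin n → F2} (h0 : get v 0 = 1)
    (h1 : get v (n - 1) = 1) {i : ℕ} (hi : i < n - 1) :
    lexLt ((nextMap fPRR)^[i] (compSt v)) ((nextMap fPRR)^[i] v) := by
  have hfirst : ∀ j < n - 1,
      get ((nextMap fPRR)^[j] (compSt v)) 0 = get ((nextMap fPRR)^[j] v) 0 := fun j hj => by
    rw [← zero_add j, ← get_iterate_nextMap _ _ _ (by omega),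
      ← get_iterate_nextMap _ _ _ (by omega)]
    exact get_compSt_of_lt v hj
  have hwrap : i + (n - 1 - i) = 0 + (n - 1) := by omega
  refine lexLt_of_get (j := n - 1 - i) (by omega) (fun j hj => ?_) ?_ ?_
  · rw [get_iterate_nextMap _ (compSt v) i (by omega), get_iterate_nextMap _ v i (by omega)]
    exact hfirst _ (by omega)
  · rw [get_iterate_nextMap _ _ _ (by omega), hwrap, get_iterate_add_pred hn,
      endSum_compSt hn, endSum, Function.iterate_zero_apply, get_compSt_of_lt v (by omega), h0, h1]
    decide
  · rw [get_iterate_nextMap _ _ _ (by omega), hwrap, get_iterate_add_pred hn, endSum,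
      Function.iterate_zero_apply, h0, h1]
    decide

lemma exists_lexLt_mem_orbit_compSt (hn : 2 ≤ n) {v : Fin n → F2} (h0 : get v 0 = 1)
    (h1 : get v (n - 1) = 1) :
    ∀ p ∈ orbit (nextMap fPRR) v, ∃ c ∈ orbit (nextMap fPRR) (compSt v), lexLt c p := by
  rintro _ ⟨j, rfl⟩
  have hv : endSum v = 0 := by rw [endSum, h0, h1]; decide
  refine ⟨_, ⟨j % (n - 1), rfl⟩, ?_⟩
  rw [← (isPeriodicPt_nextMap_fPRR hn hv).iterate_mod_apply j]
  exact lexLt_iterate_compSt hn h0 h1 (Nat.mod_lt _ (by omega))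

end PureRunLength

/-- for a state `v` with `v_0 = v_{n-1} = 1`, the companion state lies in a
CCR-type cycle distinct from the (PCR-type) cycle of `v`, and the cycle representative of
that CCR-type cycle is lexicographically smaller than that of the cycle of `v`. -/
theorem pcr_cycle_adjacent_smaller_ccr (n : ℕ) (hn : 3 ≤ n) (v : Fin n → F2)
    (h0 : get v 0 = 1) (h1 : get v (n - 1) = 1) :
    orbit (nextMap (n := n) fPRR) (compSt v) ≠ orbit (nextMap (n := n) fPRR) v ∧
    (∀ w ∈ orbit (nextMap (n := n) fPRR) (compSt v), get w 0 ≠ get w (n - 1)) ∧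
    ∃ rC rP : Fin n → F2,
      rC ∈ orbit (nextMap (n := n) fPRR) (compSt v) ∧ isCycleRep (nextMap (n := n) fPRR) rC ∧
      rP ∈ orbit (nextMap (n := n) fPRR) v ∧ isCycleRep (nextMap (n := n) fPRR) rP ∧
      lexLt rC rP := by
  have hn2 : 2 ≤ n := by omega
  have hCCR : ∀ w ∈ orbit (nextMap fPRR) (compSt v), get w 0 ≠ get w (n - 1) := by
    rintro w ⟨k, rfl⟩ heq
    have hsum := endSum_iterate_nextMap_fPRR hn2 (compSt v) k
    rw [endSum, heq, CharTwo.add_self_eq_zero, endSum_compSt hn2, endSum, h0, h1] at hsum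
    exact absurd hsum (by decide)
  have hne : orbit (nextMap fPRR) (compSt v) ≠ orbit (nextMap fPRR) v := fun he =>
    hCCR v (he ▸ mem_orbit_self _ v) (h0.trans h1.symm)
  obtain ⟨rC, hrC, hrepC, hminC⟩ := exists_isCycleRep (nextMap fPRR) (compSt v)
  obtain ⟨rP, hrP, hrepP, -⟩ := exists_isCycleRep (nextMap fPRR) v
  obtain ⟨c, hc, hlt⟩ := exists_lexLt_mem_orbit_compSt hn2 h0 h1 rP hrP
  exact ⟨hne, hCCR, rC, rP, hrC, hrepC, hrP, hrepP, lexLt_of_lexLe_of_lexLt (hminC c hc) hlt⟩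
end

section
/- Let n ≥ 3 and let C be a CCR-type cycle of the PRR of order n. Then its cycle representative v = (v_0,…,v_{n-1}) satisfies v_0 = 0, v_{n-2} = 0 and v_{n-1} = 1. -/
attribute [local instance] Classical.propDecidable

noncomputable def sBit {n : ℕ} (v : Fin n → F2) (k : ℕ) : F2 :=
  get ((nextMap (n := n) fPRR)^[k] v) 0

lemma get_pos {n : ℕ} (c : Fin n → F2) (j : ℕ) (h : j < n) : get c j = c ⟨j, h⟩ :=
  dif_pos h

lemma sBit_eq {n : ℕ} (v : Fin n → F2) (k : ℕ) (h : 0 < n) :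
    sBit v k = ((nextMap (n := n) fPRR)^[k] v) ⟨0, h⟩ :=
  get_pos _ 0 h

lemma coordEq {n : ℕ} (v : Fin n → F2) :
    ∀ i k (h : i < n), ((nextMap (n := n) fPRR)^[k] v) ⟨i, h⟩ = sBit v (k + i) := by
  intro i
  induction i with
  | zero =>
    intro k h
    rw [Nat.add_zero, sBit_eq v k h]
  | succ i ih =>
    intro k h
    have h2 : (nextMap (n := n) fPRR)^[k+1] v
        = nextMap (n := n) fPRR ((nextMap (n := n) fPRR)^[k] v) :=
      Function.iterate_succ_apply' _ k v
    have h3 : ((nextMap (n := n) fPRR)^[k+1] v) ⟨i, by omega⟩ = sBit v (k + 1 + i) :=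
      ih (k+1) (by omega)
    rw [h2] at h3
    have h4 : nextMap (n := n) fPRR ((nextMap (n := n) fPRR)^[k] v) ⟨i, by omega⟩
        = ((nextMap (n := n) fPRR)^[k] v) ⟨i + 1, h⟩ := by
      simp [nextMap, h]
    rw [h4] at h3
    rw [h3]
    congr 1
    omega

/-- the cycle representative `v` of a CCR-type cycle of the PRR of order `n`
satisfies `v_0 = 0`, `v_{n-2} = 0` and `v_{n-1} = 1`. -/
theorem ccr_cycle_rep_form (n : ℕ) (hn : 3 ≤ n) (v : Fin n → F2)
    (hccr : ∀ w ∈ orbit (nextMap (n := n) fPRR) v, get w 0 ≠ get w (n - 1))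
    (hrep : isCycleRep (nextMap (n := n) fPRR) v) :
    get v 0 = 0 ∧ get v (n - 2) = 0 ∧ get v (n - 1) = 1 := by
  have hn0 : 0 < n := by omega
  -- the bit sequence s k = sBit v k
  have hv : ∀ (i : ℕ) (h : i < n), v ⟨i, h⟩ = sBit v i := by
    intro i h
    have := coordEq v i 0 h
    simpa using this
  -- CCR step: s (k + (n-1)) = s k + 1
  have hstep : ∀ k : ℕ, sBit v (k + (n - 1)) = sBit v k + 1 := by
    intro k
    have hmem : (nextMap (n := n) fPRR)^[k] v ∈ orbit (nextMap (n := n) fPRR) v := ⟨k, rfl⟩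
    have hne := hccr _ hmem
    have e0 : get ((nextMap (n := n) fPRR)^[k] v) 0 = sBit v k := rfl
    have e1 : get ((nextMap (n := n) fPRR)^[k] v) (n - 1) = sBit v (k + (n - 1)) := by
      have hlt : n - 1 < n := by omega
      rw [get_pos _ _ hlt, coordEq v (n - 1) k hlt]
    rw [e0, e1] at hne
    have : ∀ a b : F2, a ≠ b → b = a + 1 := by decide
    exact this _ _ hne
  have hlex : ∀ k : ℕ, lexLe v ((nextMap (n := n) fPRR)^[k] v) := fun k => hrep _ ⟨k, rfl⟩
  have hF2 : ∀ a : F2, a = 0 ∨ a = 1 := by decide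
  have hval : ∀ a : F2, a.val ≤ 0 → a = 0 := by decide
  -- s 0 = 0
  have hs0 : sBit v 0 = 0 := by
    rcases hF2 (sBit v 0) with h | h
    · exact h
    · exfalso
      have hle := hlex (n - 1) ⟨0, hn0⟩ (by intro i hi; exact absurd hi (by simp [Fin.lt_def]))
      rw [show (((nextMap (n := n) fPRR)^[n-1] v) ⟨0, hn0⟩) = sBit v ((n-1) + 0) from
        coordEq v 0 (n-1) hn0] at hle
      have hv0 : v ⟨0, hn0⟩ = sBit v 0 := hv 0 hn0
      rw [hv0, h] at hle
      have h1 : sBit v ((n-1) + 0) = 1 := by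
        rcases hF2 (sBit v ((n-1) + 0)) with h2 | h2
        · rw [h2] at hle; simp at hle
        · exact h2
      have h2 : sBit v (0 + (n - 1)) = sBit v 0 + 1 := hstep 0
      rw [h, show (0 : ℕ) + (n-1) = (n-1) + 0 from by omega, h1] at h2
      exact absurd h2 (by decide)
  have hsn1 : sBit v (n - 1) = 1 := by
    have := hstep 0
    rw [hs0, Nat.zero_add] at this
    rw [this]; decide
  refine ⟨by rw [get_pos _ _ hn0, hv 0 hn0, hs0], ?_, ?_⟩
  · -- v_{n-2} = 0
    have hlt2 : n - 2 < n := by omega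
    rw [get_pos _ _ hlt2, hv (n-2) hlt2]
    rcases hF2 (sBit v (n - 2)) with h | h
    · exact h
    exfalso
    -- w = σ^[2n-3] v
    set w := (nextMap (n := n) fPRR)^[2*n-3] v with hw
    have hadd11 : ∀ a : F2, a + 1 + 1 = a := by decide
    have hw0 : w ⟨0, hn0⟩ = 0 := by
      rw [hw, coordEq v 0 (2*n-3) hn0, show 2*n-3+0 = (n-2) + (n-1) from by omega,
        hstep (n-2), h]
      decide
    have hw1 : w ⟨1, by omega⟩ = 0 := by
      rw [hw, coordEq v 1 (2*n-3) (by omega), show 2*n-3+1 = (n-1) + (n-1) from by omega,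
        hstep (n-1), hsn1]
      decide
    have hwi : ∀ (i : ℕ) (hi : i < n), 2 ≤ i → w ⟨i, hi⟩ = sBit v (i - 1) := by
      intro i hi h2
      rw [hw, coordEq v i (2*n-3) hi, show 2*n-3+i = (n-2+i) + (n-1) from by omega,
        hstep (n-2+i), show n-2+i = (i-1) + (n-1) from by omega, hstep (i-1), hadd11]
    -- key induction: s j = 0 for all j ≤ n-1
    have key : ∀ j, j ≤ n - 1 → sBit v j = 0 := by
      intro j
      induction j using Nat.strong_induction_on with
      | _ j ih =>
        intro hj
        rcases Nat.eq_zero_or_pos j with h0 | hpos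
        · rw [h0]; exact hs0
        have hjn : j < n := by omega
        have hle := hlex (2*n-3) ⟨j, hjn⟩ ?_
        · rw [hv j hjn] at hle
          have hwj : w ⟨j, hjn⟩ = 0 := by
            rcases Nat.lt_or_ge j 2 with hj2 | hj2
            · have : j = 1 := by omega
              subst this; exact hw1
            · rw [hwi j hjn hj2]
              exact ih (j-1) (by omega) (by omega)
          rw [← hw, hwj] at hle
          exact hval _ hle
        · intro i hij
          have hiv : (i : ℕ) < j := hij
          rw [hv i.val i.isLt]
          have hwieq : w ⟨i.val, i.isLt⟩ = 0 := by
            rcases Nat.eq_zero_or_pos i.val with h0 | hp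
            · have : (⟨i.val, i.isLt⟩ : Fin n) = ⟨0, hn0⟩ := by simp [h0]
              rw [this]; exact hw0
            rcases Nat.lt_or_ge i.val 2 with hlt' | hge
            · have h1 : i.val = 1 := by omega
              have : (⟨i.val, i.isLt⟩ : Fin n) = ⟨1, by omega⟩ := by simp [h1]
              rw [this]; exact hw1
            · rw [hwi i.val i.isLt hge]
              exact ih (i.val - 1) (by omega) (by omega)
          have : w i = w ⟨i.val, i.isLt⟩ := by congr
          rw [← hw, this, hwieq]
          rcases Nat.eq_zero_or_pos i.val with h0 | hp
          · have : (sBit v i.val) = sBit v 0 := by rw [h0]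
            rw [this, hs0]
          · exact ih i.val hiv (by omega)
    have := key (n-1) le_rfl
    rw [hsn1] at this
    exact absurd this (by decide)
  · have hlt1 : n - 1 < n := by omega
    rw [get_pos _ _ hlt1, hv (n-1) hlt1, hsn1]
end

section
/- Let n ≥ 3. The number of orbits of the state map σ_PRR on F₂ⁿ equals Z_{n-1} + Z*_{n-1}, where Z_{n-1} = (1/(n−1)) · Σ_{d | n−1} φ(d) · 2^{(n−1)/d} and Z*_{n-1} = (1/(2(n−1))) · Σ_{d | n−1, d odd} φ(d) · 2^{(n−1)/d}, with φ denoting Euler's totient function. -/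
attribute [local instance] Classical.propDecidable

namespace PRRAux

open Finset

lemma F2_add_self (x : F2) : x + x = 0 := by revert x; decide

lemma get_lt {m : ℕ} (c : Fin m → F2) {j : ℕ} (h : j < m) : get c j = c ⟨j, h⟩ := dif_pos h

lemma iterate_mod {X : Type*} (f : X → X) {N : ℕ} (hf : f^[N] = id) (p : ℕ) :
    f^[p] = f^[p % N] := by
  conv_lhs => rw [← Nat.div_add_mod p N]
  rw [Nat.add_comm, Function.iterate_add, Function.iterate_mul, hf, Function.iterate_id]
  rfl

lemma burnside {X : Type*} [Fintype X] (f : X → X) (N : ℕ) (hN : 0 < N) (hf : f^[N] = id) :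
    N * {O : Set X | ∃ v, O = orbit f v}.ncard
      = ∑ k ∈ Finset.range N, Nat.card {x : X // f^[k] x = x} := by
  haveI : NeZero N := ⟨hN.ne'⟩
  letI act : MulAction (Multiplicative (ZMod N)) X :=
    { smul := fun g x => f^[(Multiplicative.toAdd g).val] x
      one_smul := fun x => by
        show f^[(Multiplicative.toAdd (1 : Multiplicative (ZMod N))).val] x = x
        simp
      mul_smul := fun a b x => by
        show f^[(Multiplicative.toAdd (a * b)).val] x
            = f^[(Multiplicative.toAdd a).val] (f^[(Multiplicative.toAdd b).val] x)
        rw [← Function.iterate_add_apply]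
        have h1 : (Multiplicative.toAdd (a * b)).val
            = ((Multiplicative.toAdd a).val + (Multiplicative.toAdd b).val) % N :=
          ZMod.val_add _ _
        rw [h1, ← iterate_mod f hf] }
  have horb : ∀ x : X, MulAction.orbit (Multiplicative (ZMod N)) x = orbit f x := by
    intro x; ext y; constructor
    · rintro ⟨g, rfl⟩; exact ⟨(Multiplicative.toAdd g).val, rfl⟩
    · rintro ⟨k, rfl⟩
      refine ⟨Multiplicative.ofAdd ((k : ZMod N)), ?_⟩
      show f^[((k : ZMod N)).val] x = f^[k] x
      rw [ZMod.val_natCast, ← iterate_mod f hf]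
  haveI : Fintype (MulAction.orbitRel.Quotient (Multiplicative (ZMod N)) X) :=
    Quotient.fintype _
  have hcount : Fintype.card (MulAction.orbitRel.Quotient (Multiplicative (ZMod N)) X)
      = {O : Set X | ∃ v, O = orbit f v}.ncard := by
    rw [← Nat.card_coe_set_eq, ← Nat.card_eq_fintype_card]
    apply Nat.card_congr
    refine Equiv.ofBijective
      (Quotient.lift (fun x => (⟨orbit f x, x, rfl⟩ : {O : Set X // ∃ v, O = orbit f v})) ?_)
      ⟨?_, ?_⟩
    · intro a b hab
      have : MulAction.orbit (Multiplicative (ZMod N)) a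
          = MulAction.orbit (Multiplicative (ZMod N)) b := by
        rw [MulAction.orbit_eq_iff]; exact hab
      exact Subtype.ext (show orbit f a = orbit f b by rw [← horb, ← horb, this])
    · refine Quotient.ind₂ ?_
      intro a b hab
      have h1 : orbit f a = orbit f b := congrArg Subtype.val hab
      apply Quotient.sound
      show a ∈ MulAction.orbit (Multiplicative (ZMod N)) b
      rw [← MulAction.orbit_eq_iff, horb, horb]; exact h1
    · rintro ⟨O, v, rfl⟩
      exact ⟨Quotient.mk _ v, rfl⟩
  have hb := MulAction.sum_card_fixedBy_eq_card_orbits_mul_card_group (Multiplicative (ZMod N)) X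
  have hGcard : Fintype.card (Multiplicative (ZMod N)) = N := by
    simp [ZMod.card]
  have hsum : (∑ g : Multiplicative (ZMod N), Fintype.card (MulAction.fixedBy X g))
      = ∑ k ∈ Finset.range N, Nat.card {x : X // f^[k] x = x} := by
    rw [← Fin.sum_univ_eq_sum_range (fun k => Nat.card {x : X // f^[k] x = x}) N]
    apply Fintype.sum_bijective
      (fun g : Multiplicative (ZMod N) => (⟨(Multiplicative.toAdd g).val, ZMod.val_lt _⟩ : Fin N))
    · constructor
      · intro a b hab
        have := congrArg Fin.val hab
        exact Multiplicative.toAdd.injective (ZMod.val_injective _ this)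
      · intro j
        refine ⟨Multiplicative.ofAdd ((j : ℕ) : ZMod N), ?_⟩
        apply Fin.ext
        simp [ZMod.val_natCast, Nat.mod_eq_of_lt j.2]
    · intro g
      rw [← Nat.card_eq_fintype_card]
      exact Nat.card_congr (Equiv.subtypeEquivRight fun x => Iff.rfl)
  rw [← hcount, ← hsum, hb, hGcard, Nat.mul_comm]

variable {m : ℕ}

lemma rot_rot (a b : ℕ) (u : Fin m → F2) : rot a (rot b u) = rot (a + b) u := by
  funext i
  simp only [rot]
  congr 1
  apply Fin.ext
  show (((i : ℕ) + a) % m + b) % m = ((i : ℕ) + (a + b)) % m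
  rw [Nat.mod_add_mod, Nat.add_assoc]

lemma rot_mod (r : ℕ) (u : Fin m → F2) : rot r u = rot (r % m) u := by
  funext i
  simp only [rot]
  congr 1
  apply Fin.ext
  show ((i : ℕ) + r) % m = ((i : ℕ) + r % m) % m
  conv_rhs => rw [Nat.add_mod, Nat.mod_mod_of_dvd _ dvd_rfl, ← Nat.add_mod]

lemma rot_zero (u : Fin m → F2) : rot 0 u = u := by
  funext i
  simp only [rot]
  congr 1
  exact Fin.ext (by simp [Nat.mod_eq_of_lt i.2])

lemma rot_m (u : Fin m → F2) : rot m u = u := by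
  rw [rot_mod, Nat.mod_self, rot_zero]

lemma rot_mul (g t : ℕ) (u : Fin m → F2) (h : rot g u = u) : rot (g * t) u = u := by
  induction t with
  | zero => simpa using rot_zero u
  | succ t ih =>
    have : g * (t + 1) = g * t + g := by ring
    rw [this, ← rot_rot (g * t) g u, h, ih]

lemma rot_gcd (u : Fin m → F2) (a b : ℕ) (ha : rot a u = u) (hb : rot b u = u) :
    rot (Nat.gcd a b) u = u := by
  refine Nat.gcd.induction (P := fun a b => rot a u = u → rot b u = u → rot (Nat.gcd a b) u = u)
    a b (fun n _ hn => by rwa [Nat.gcd_zero_left]) (fun a b ha0 ih h1 h2 => ?_) ha hb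
  rw [Nat.gcd_rec]
  refine ih ?_ h1
  have hb' : rot b u = rot (b % a) u := by
    conv_lhs => rw [← Nat.div_add_mod b a, Nat.add_comm, ← rot_rot (b % a) (a * (b / a)) u,
      rot_mul a (b / a) u h1]
  rw [← hb']; exact h2

lemma rot_eq_gcd_iff (hm : 0 < m) (k : ℕ) (u : Fin m → F2) :
    rot k u = u ↔ rot (Nat.gcd k m) u = u := by
  constructor
  · intro h; exact rot_gcd u k m h (rot_m u)
  · intro h
    obtain ⟨t, ht⟩ := Nat.gcd_dvd_left k m
    rw [ht]; exact rot_mul _ _ _ h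

lemma periodic_char (hm : 0 < m) {g : ℕ} (hg : g ∣ m) (hg0 : 0 < g) (u : Fin m → F2) :
    rot g u = u ↔ ∀ j, j < m → get u j = get u (j % g) := by
  have hgm : g ≤ m := Nat.le_of_dvd hm hg
  constructor
  · intro h
    have hstep : ∀ j, j < m → get u ((j + g) % m) = get u j := by
      intro j hj
      have := congrFun h ⟨j, hj⟩
      rw [get_lt u (Nat.mod_lt _ hm), get_lt u hj]
      exact this
    have claim : ∀ t j, j < m → get u ((j + g * t) % m) = get u j := by
      intro t
      induction t with
      | zero => intro j hj; simp [Nat.mod_eq_of_lt hj]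
      | succ t ih =>
        intro j hj
        have e1 : (j + g * (t + 1)) % m = ((j + g * t) % m + g) % m := by
          rw [Nat.mod_add_mod]; ring_nf
        rw [e1, hstep _ (Nat.mod_lt _ hm), ih j hj]
    intro j hj
    have e : j % g + g * (j / g) = j := Nat.mod_add_div j g
    have h2 := claim (j / g) (j % g) (lt_of_lt_of_le (Nat.mod_lt _ hg0) hgm)
    rw [e, Nat.mod_eq_of_lt hj] at h2
    exact h2
  · intro h
    funext i
    show u ⟨((i : ℕ) + g) % m, _⟩ = u i
    rw [← get_lt u (Nat.mod_lt _ hm), h _ (Nat.mod_lt _ hm), Nat.mod_mod_of_dvd _ hg,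
      Nat.add_mod_right, ← h _ i.2, get_lt u i.2]

noncomputable def periodicEquiv (hm : 0 < m) {g : ℕ} (hg : g ∣ m) (hg0 : 0 < g) :
    {u : Fin m → F2 // rot g u = u} ≃ (Fin g → F2) where
  toFun u := fun j => u.1 ⟨j, lt_of_lt_of_le j.2 (Nat.le_of_dvd hm hg)⟩
  invFun w := ⟨fun i => w ⟨(i : ℕ) % g, Nat.mod_lt _ hg0⟩, by
    rw [periodic_char hm hg hg0]
    intro j hj
    rw [get_lt _ hj, get_lt _ (lt_of_lt_of_le (Nat.mod_lt _ hg0) (Nat.le_of_dvd hm hg))]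
    exact congrArg w (Fin.ext (Nat.mod_mod_of_dvd _ dvd_rfl).symm)⟩
  left_inv u := by
    apply Subtype.ext
    funext i
    have h := (periodic_char hm hg hg0 u.1).mp u.2 i i.2
    rw [get_lt _ i.2, get_lt _ (lt_of_lt_of_le (Nat.mod_lt _ hg0) (Nat.le_of_dvd hm hg))] at h
    exact h.symm
  right_inv w := by
    funext j
    exact congrArg w (Fin.ext (Nat.mod_eq_of_lt j.2))

lemma card_rot_fixed (hm : 0 < m) {g : ℕ} (hg : g ∣ m) (hg0 : 0 < g) :
    Nat.card {u : Fin m → F2 // rot g u = u} = 2 ^ g := by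
  rw [Nat.card_congr (periodicEquiv hm hg hg0), Nat.card_eq_fintype_card]
  simp [ZMod.card]

lemma card_sum_zero (g : ℕ) (hg0 : 0 < g) :
    Nat.card {w : Fin g → F2 // (∑ j, w j) = 0} = 2 ^ (g - 1) := by
  classical
  set i0 : Fin g := ⟨0, hg0⟩
  set flip : (Fin g → F2) → (Fin g → F2) := fun w => Function.update w i0 (w i0 + 1) with hflip
  have hsum : ∀ w : Fin g → F2, (∑ j, flip w j) = (∑ j, w j) + 1 := by
    intro w
    rw [hflip]
    rw [Finset.sum_update_of_mem (Finset.mem_univ i0)]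
    have h2 : ∑ j, w j = w i0 + ∑ j ∈ Finset.univ \ {i0}, w j := by
      rw [Finset.sdiff_singleton_eq_erase, Finset.add_sum_erase _ _ (Finset.mem_univ i0)]
    rw [h2]; ring
  have hflip2 : ∀ w, flip (flip w) = w := by
    intro w
    simp only [hflip, Function.update_idem, Function.update_self]
    have h11 : w i0 + 1 + 1 = w i0 := by
      have : ∀ x : F2, x + 1 + 1 = x := by decide
      exact this _
    rw [h11, Function.update_eq_self]
  have h01 : ∀ x : F2, ¬ x = 0 → x = 1 := by decide
  have e : {w : Fin g → F2 // (∑ j, w j) = 0} ≃ {w : Fin g → F2 // ¬ (∑ j, w j) = 0} :=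
    { toFun := fun w => ⟨flip w.1, by rw [hsum, w.2]; decide⟩
      invFun := fun w => ⟨flip w.1, by rw [hsum, h01 _ w.2]; decide⟩
      left_inv := fun w => Subtype.ext (hflip2 w.1)
      right_inv := fun w => Subtype.ext (hflip2 w.1) }
  have hadd : Nat.card {w : Fin g → F2 // (∑ j, w j) = 0}
      + Nat.card {w : Fin g → F2 // ¬ (∑ j, w j) = 0} = 2 ^ g := by
    rw [Nat.card_eq_fintype_card, Nat.card_eq_fintype_card, ← Fintype.card_sum]
    rw [Fintype.card_congr (Equiv.sumCompl (fun w : Fin g → F2 => (∑ j, w j) = 0))]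
    simp [ZMod.card]
  have hcc := Nat.card_congr e
  have hpow : 2 ^ g = 2 * 2 ^ (g - 1) := by
    cases g with
    | zero => omega
    | succ t => rw [pow_succ, Nat.add_sub_cancel, Nat.mul_comm]
  apply Nat.eq_of_mul_eq_mul_left (show 0 < 2 by norm_num)
  rw [← hpow, ← hadd, Nat.two_mul, hcc]

lemma sum_range_add'' {M : Type*} [AddCommMonoid M] (f : ℕ → M) (a b : ℕ) :
    ∑ i ∈ Finset.range (a + b), f i
      = (∑ i ∈ Finset.range a, f i) + ∑ i ∈ Finset.range b, f (a + i) := by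
  induction b with
  | zero => simp
  | succ b ih =>
    rw [← Nat.add_assoc, Finset.sum_range_succ, ih, Finset.sum_range_succ, add_assoc]

noncomputable def tau {m : ℕ} (p : F2 × (Fin m → F2)) : F2 × (Fin m → F2) :=
  (p.1 + get p.2 0, rot 1 p.2)

noncomputable def S {m : ℕ} (k : ℕ) (u : Fin m → F2) : F2 :=
  ∑ i ∈ Finset.range k, get u (i % m)

lemma tau_iterate (hm : 0 < m) (k : ℕ) (p : F2 × (Fin m → F2)) :
    tau^[k] p = (p.1 + S k p.2, rot k p.2) := by
  induction k with
  | zero => simp [S, rot_zero]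
  | succ k ih =>
    rw [Function.iterate_succ_apply', ih]
    show (p.1 + S k p.2 + get (rot k p.2) 0, rot 1 (rot k p.2)) = _
    have h1 : get (rot k p.2) 0 = get p.2 (k % m) := by
      rw [get_lt _ hm, get_lt _ (Nat.mod_lt _ hm)]
      exact congrArg p.2 (Fin.ext (by simp))
    rw [h1, rot_rot, Nat.add_comm 1 k]
    have h2 : S (k + 1) p.2 = S k p.2 + get p.2 (k % m) := Finset.sum_range_succ _ _
    rw [h2, add_assoc]

lemma S_decomp (hm : 0 < m) {g : ℕ} (hg : g ∣ m) (hg0 : 0 < g) (u : Fin m → F2)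
    (hu : rot g u = u) (q : ℕ) :
    S (g * q) u = q • (∑ i ∈ Finset.range g, get u i) := by
  have hchar := (periodic_char hm hg hg0 u).mp hu
  induction q with
  | zero => simp [S]
  | succ q ih =>
    have hgq : g * (q + 1) = g * q + g := by ring
    rw [hgq]
    show ∑ i ∈ Finset.range (g * q + g), get u (i % m) = _
    rw [sum_range_add'' (fun i => get u (i % m)) (g * q) g]
    have hin : ∀ i ∈ Finset.range g, get u ((g * q + i) % m) = get u i := by
      intro i hi
      have hi' : i < g := Finset.mem_range.mp hi
      rw [hchar _ (Nat.mod_lt _ hm), Nat.mod_mod_of_dvd _ hg, Nat.mul_add_mod,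
        Nat.mod_eq_of_lt hi']
    rw [Finset.sum_congr rfl hin]
    show S (g * q) u + _ = _
    rw [ih, succ_nsmul]

lemma tau_iterate_id (hm : 0 < m) : (tau (m := m))^[2 * m] = id := by
  funext p
  rw [tau_iterate hm]
  have h1 : rot (2 * m) p.2 = p.2 := by
    rw [rot_mod]
    have h0 : 2 * m % m = 0 := by
      rw [Nat.mul_comm]; exact Nat.mul_mod_right m 2
    rw [h0, rot_zero]
  have h2 : S (2 * m) p.2 = 0 := by
    have hc : (2 : ℕ) * m = m * 2 := by ring
    rw [hc, S_decomp hm dvd_rfl hm p.2 (rot_m p.2) 2, two_nsmul, F2_add_self]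
  rw [h1, h2, add_zero]
  rfl

lemma nsmul_F2 (q : ℕ) (x : F2) : q • x = if Even q then 0 else x := by
  rcases Nat.even_or_odd q with he | ho
  · obtain ⟨r, hr⟩ := he
    rw [if_pos ⟨r, hr⟩, hr, add_nsmul, F2_add_self]
  · obtain ⟨r, hr⟩ := ho
    rw [if_neg (by simp [hr, Nat.even_add_one, Nat.even_iff, Nat.mul_mod_right]), hr]
    rw [add_nsmul, one_nsmul, two_mul, add_nsmul, F2_add_self, zero_add]

lemma sum_equiv_eq (hm : 0 < m) {g : ℕ} (hg : g ∣ m) (hg0 : 0 < g)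
    (v : {u : Fin m → F2 // rot g u = u}) :
    (∑ i ∈ Finset.range g, get v.1 i) = ∑ j, (periodicEquiv hm hg hg0 v) j := by
  rw [← Fin.sum_univ_eq_sum_range (fun i => get v.1 i) g]
  refine Finset.sum_congr rfl fun j _ => ?_
  exact get_lt _ _

lemma card_tau_fixed (hm : 0 < m) (k : ℕ) :
    Nat.card {p : F2 × (Fin m → F2) // tau^[k] p = p}
      = if Even (k / Nat.gcd k m) then 2 ^ (Nat.gcd k m + 1) else 2 ^ (Nat.gcd k m) := by
  set g := Nat.gcd k m with hgdef
  have hg0 : 0 < g := Nat.gcd_pos_of_pos_right _ hm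
  have hgm : g ∣ m := Nat.gcd_dvd_right k m
  have hgk : g ∣ k := Nat.gcd_dvd_left k m
  have hk : g * (k / g) = k := Nat.mul_div_cancel' hgk
  set q := k / g with hq
  have hiff : ∀ p : F2 × (Fin m → F2), tau^[k] p = p ↔
      (rot g p.2 = p.2 ∧ (¬ Even q → (∑ i ∈ Finset.range g, get p.2 i) = 0)) := by
    intro p
    rw [tau_iterate hm, Prod.ext_iff]
    constructor
    · rintro ⟨h1, h2⟩
      have hrot : rot g p.2 = p.2 := (rot_eq_gcd_iff hm k p.2).mp h2
      have hS : S k p.2 = 0 := by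
        have := h1.trans (add_zero p.1).symm
        exact add_left_cancel this
      refine ⟨hrot, fun hodd => ?_⟩
      have hdec : S k p.2 = q • (∑ i ∈ Finset.range g, get p.2 i) := by
        rw [← hk]; exact S_decomp hm hgm hg0 _ hrot q
      rw [hdec, nsmul_F2, if_neg hodd] at hS
      exact hS
    · rintro ⟨h1, h2⟩
      have hrotk : rot k p.2 = p.2 := (rot_eq_gcd_iff hm k p.2).mpr h1
      have hS : S k p.2 = 0 := by
        have hdec : S k p.2 = q • (∑ i ∈ Finset.range g, get p.2 i) := by
          rw [← hk]; exact S_decomp hm hgm hg0 _ h1 q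
        rw [hdec, nsmul_F2]
        by_cases hq2 : Even q
        · rw [if_pos hq2]
        · rw [if_neg hq2]; exact h2 hq2
      exact ⟨by rw [hS, add_zero], hrotk⟩
  have e1 : {p : F2 × (Fin m → F2) // tau^[k] p = p} ≃
      F2 × {u : Fin m → F2 //
        rot g u = u ∧ (¬ Even q → (∑ i ∈ Finset.range g, get u i) = 0)} :=
    (Equiv.subtypeEquivRight hiff).trans
      { toFun := fun p => (p.1.1, ⟨p.1.2, p.2⟩)
        invFun := fun x => ⟨(x.1, x.2.1), x.2.2⟩
        left_inv := fun p => rfl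
        right_inv := fun x => rfl }
  rw [Nat.card_congr e1, Nat.card_prod]
  have hF2 : Nat.card F2 = 2 := by rw [Nat.card_eq_fintype_card]; simp [ZMod.card]
  rw [hF2]
  by_cases hq2 : Even q
  · rw [if_pos hq2]
    have e2 : {u : Fin m → F2 //
        rot g u = u ∧ (¬ Even q → (∑ i ∈ Finset.range g, get u i) = 0)}
        ≃ {u : Fin m → F2 // rot g u = u} :=
      Equiv.subtypeEquivRight (fun u => by simp [hq2])
    rw [Nat.card_congr e2, card_rot_fixed hm hgm hg0, pow_succ]; ring
  · rw [if_neg hq2]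
    have e2 : {u : Fin m → F2 //
        rot g u = u ∧ (¬ Even q → (∑ i ∈ Finset.range g, get u i) = 0)}
        ≃ {w : Fin g → F2 // (∑ j, w j) = 0} := by
      refine ((Equiv.subtypeSubtypeEquivSubtypeInter _ _).symm.trans
        (Equiv.subtypeEquiv (periodicEquiv hm hgm hg0) ?_))
      intro v
      rw [← sum_equiv_eq hm hgm hg0 v]
      constructor
      · intro h; exact h hq2
      · intro h _; exact h
    rw [Nat.card_congr e2, card_sum_zero g hg0]
    conv_rhs => rw [← Nat.succ_pred_eq_of_pos hg0, pow_succ]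
    have hp : g.pred = g - 1 := rfl
    rw [hp, Nat.mul_comm]

lemma bucket (m : ℕ) (hm : 0 < m) (F : ℕ → ℕ) :
    ∑ k ∈ Finset.range m, F (Nat.gcd k m) = ∑ d ∈ m.divisors, Nat.totient d * F (m / d) := by
  have h1 : ∑ k ∈ Finset.range m, F (Nat.gcd k m)
      = ∑ d ∈ m.divisors,
          ∑ k ∈ (Finset.range m).filter (fun k => m.gcd k = d), F (Nat.gcd k m) :=
    (Finset.sum_fiberwise_of_maps_to
      (fun k _ => Nat.mem_divisors.mpr ⟨Nat.gcd_dvd_left m k, hm.ne'⟩) _).symm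
  rw [h1]
  have h2 : ∀ d ∈ m.divisors,
      (∑ k ∈ (Finset.range m).filter (fun k => m.gcd k = d), F (Nat.gcd k m))
        = Nat.totient (m / d) * F d := by
    intro d hd
    have hc : ∀ k ∈ (Finset.range m).filter (fun k => m.gcd k = d), F (Nat.gcd k m) = F d := by
      intro k hk
      have := (Finset.mem_filter.mp hk).2
      rw [Nat.gcd_comm, this]
    rw [Finset.sum_congr rfl hc, Finset.sum_const,
      ← Nat.totient_div_of_dvd (Nat.mem_divisors.mp hd).1, smul_eq_mul]
  rw [Finset.sum_congr rfl h2]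
  calc ∑ d ∈ m.divisors, Nat.totient (m / d) * F d
      = ∑ d ∈ m.divisors, Nat.totient (m / (m / d)) * F (m / d) :=
        (Nat.sum_div_divisors m (fun d => Nat.totient (m / d) * F d)).symm
    _ = ∑ d ∈ m.divisors, Nat.totient d * F (m / d) :=
        Finset.sum_congr rfl (fun d hd => by
          rw [Nat.div_div_self (Nat.mem_divisors.mp hd).1 hm.ne'])

lemma pair (m : ℕ) (hm : 0 < m) (k : ℕ) :
    ((if Even (k / Nat.gcd k m) then 2 ^ (Nat.gcd k m + 1) else 2 ^ (Nat.gcd k m))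
      + (if Even ((m + k) / Nat.gcd (m + k) m) then 2 ^ (Nat.gcd (m + k) m + 1)
          else 2 ^ (Nat.gcd (m + k) m)))
    = 2 * 2 ^ (Nat.gcd k m)
      + (if Odd (m / Nat.gcd k m) then 2 ^ (Nat.gcd k m) else 0) := by
  set g := Nat.gcd k m with hgdef
  have hg0 : 0 < g := Nat.gcd_pos_of_pos_right _ hm
  have hgm : g ∣ m := Nat.gcd_dvd_right k m
  have hgk : g ∣ k := Nat.gcd_dvd_left k m
  have hgcd2 : Nat.gcd (m + k) m = g := by
    rw [Nat.add_comm, Nat.gcd_add_self_left]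
  have hdiv : (m + k) / g = m / g + k / g := by
    rw [Nat.add_div_of_dvd_right hgm]
  have hpow : 2 ^ (g + 1) = 2 * 2 ^ g := by rw [pow_succ, Nat.mul_comm]
  rw [hgcd2, hdiv]
  by_cases hme : Even (m / g)
  · have hko : ¬ Even (k / g) := by
      intro hke
      have hcop : Nat.Coprime (k / g) (m / g) := Nat.coprime_div_gcd_div_gcd hg0
      obtain ⟨a, ha⟩ := hke
      obtain ⟨b, hb⟩ := hme
      have h2 : 2 ∣ Nat.gcd (k / g) (m / g) :=
        Nat.dvd_gcd ⟨a, by omega⟩ ⟨b, by omega⟩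
      rw [hcop] at h2
      omega
    have hsum : ¬ Even (m / g + k / g) := by
      rw [Nat.even_add]
      tauto
    rw [if_neg hko, if_neg hsum, if_neg (by simpa [Nat.not_odd_iff_even] using hme),
      add_zero, two_mul]
  · have hsum : Even (m / g + k / g) ↔ ¬ Even (k / g) := by
      rw [Nat.even_add]; tauto
    rw [if_pos (Nat.not_even_iff_odd.mp hme)]
    by_cases hke : Even (k / g)
    · rw [if_pos hke, if_neg (by rw [hsum]; tauto), hpow]
    · rw [if_neg hke, if_pos (hsum.mpr hke), hpow, Nat.add_comm]

lemma sum_fixed_total (m : ℕ) (hm : 0 < m) :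
    ∑ k ∈ Finset.range (2 * m),
        (if Even (k / Nat.gcd k m) then 2 ^ (Nat.gcd k m + 1) else 2 ^ (Nat.gcd k m))
      = 2 * (∑ d ∈ m.divisors, Nat.totient d * 2 ^ (m / d))
        + ∑ d ∈ m.divisors.filter (fun d => Odd d), Nat.totient d * 2 ^ (m / d) := by
  have h2m : 2 * m = m + m := by ring
  rw [h2m, sum_range_add'']
  rw [← Finset.sum_add_distrib]
  have hpair : ∀ k ∈ Finset.range m,
      ((if Even (k / Nat.gcd k m) then 2 ^ (Nat.gcd k m + 1) else 2 ^ (Nat.gcd k m))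
        + (if Even ((m + k) / Nat.gcd (m + k) m) then 2 ^ (Nat.gcd (m + k) m + 1)
            else 2 ^ (Nat.gcd (m + k) m)))
      = 2 * 2 ^ (Nat.gcd k m)
        + (if Odd (m / Nat.gcd k m) then 2 ^ (Nat.gcd k m) else 0) :=
    fun k _ => pair m hm k
  rw [Finset.sum_congr rfl hpair, Finset.sum_add_distrib, ← Finset.mul_sum]
  congr 1
  · rw [bucket m hm (fun x => 2 ^ x)]
  · rw [bucket m hm (fun x => if Odd (m / x) then 2 ^ x else 0)]
    rw [Finset.sum_filter]
    refine Finset.sum_congr rfl fun d hd => ?_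
    rw [Nat.div_div_self (Nat.mem_divisors.mp hd).1 hm.ne']
    rw [mul_ite, mul_zero]

lemma orbit_image {X Y : Type*} (e : X ≃ Y) (sg : X → X) (tu : Y → Y)
    (hc : ∀ x, e (sg x) = tu (e x)) (v : X) : e '' orbit sg v = orbit tu (e v) := by
  have key : ∀ k x, e (sg^[k] x) = tu^[k] (e x) := by
    intro k
    induction k with
    | zero => intro x; rfl
    | succ k ih =>
      intro x
      rw [Function.iterate_succ_apply, Function.iterate_succ_apply, ih, hc]
  ext y
  simp only [orbit, inOrbit, Set.mem_image, Set.mem_setOf_eq]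
  constructor
  · rintro ⟨x, ⟨k, rfl⟩, rfl⟩
    exact ⟨k, (key k v).symm⟩
  · rintro ⟨k, rfl⟩
    exact ⟨sg^[k] v, ⟨k, rfl⟩, key k v⟩

lemma ncard_orbits_eq {X Y : Type*} (e : X ≃ Y) (sg : X → X) (tu : Y → Y)
    (hc : ∀ x, e (sg x) = tu (e x)) :
    {O : Set X | ∃ v, O = orbit sg v}.ncard = {O : Set Y | ∃ v, O = orbit tu v}.ncard := by
  have himg : (fun O => e '' O) '' {O : Set X | ∃ v, O = orbit sg v}
      = {O : Set Y | ∃ v, O = orbit tu v} := by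
    ext O
    simp only [Set.mem_image, Set.mem_setOf_eq]
    constructor
    · rintro ⟨O', ⟨v, rfl⟩, rfl⟩
      exact ⟨e v, orbit_image e sg tu hc v⟩
    · rintro ⟨w, rfl⟩
      exact ⟨orbit sg (e.symm w), ⟨_, rfl⟩,
        by rw [orbit_image e sg tu hc, e.apply_symm_apply]⟩
  rw [← himg, Set.ncard_image_of_injective _ (Set.image_injective.mpr e.injective)]

noncomputable def PhiEquiv (m : ℕ) : (Fin (m + 1) → F2) ≃ (F2 × (Fin m → F2)) where
  toFun c := (c 0, fun i => c ⟨(i : ℕ), by omega⟩ + c ⟨(i : ℕ) + 1, by omega⟩)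
  invFun p := fun j => p.1 + ∑ i ∈ Finset.range (j : ℕ), get p.2 i
  left_inv c := by
    funext j
    have claim : ∀ jv (h : jv < m + 1),
        (c 0 + ∑ i ∈ Finset.range jv,
          get (fun i : Fin m => c ⟨(i : ℕ), by omega⟩ + c ⟨(i : ℕ) + 1, by omega⟩) i)
        = c ⟨jv, h⟩ := by
      intro jv
      induction jv with
      | zero =>
        intro h
        simp only [Finset.range_zero, Finset.sum_empty, add_zero]
        exact congrArg c (Fin.ext rfl)
      | succ jv ih =>
        intro h
        rw [Finset.sum_range_succ, ← add_assoc, ih (by omega)]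
        rw [get_lt _ (show jv < m by omega)]
        show c ⟨jv, _⟩ + (c ⟨jv, _⟩ + c ⟨jv + 1, _⟩) = c ⟨jv + 1, h⟩
        have hx : ∀ a b : F2, a + (a + b) = b := by decide
        exact hx _ _
    have := claim (j : ℕ) j.2
    simpa using this
  right_inv p := by
    apply Prod.ext
    · show (p.1 + ∑ i ∈ Finset.range ((0 : Fin (m+1)) : ℕ), get p.2 i) = p.1
      simp
    · funext i
      show (p.1 + ∑ l ∈ Finset.range ((⟨(i : ℕ), by omega⟩ : Fin (m+1)) : ℕ), get p.2 l)
          + (p.1 + ∑ l ∈ Finset.range ((⟨(i : ℕ) + 1, by omega⟩ : Fin (m+1)) : ℕ), get p.2 l)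
          = p.2 i
      simp only []
      rw [Finset.sum_range_succ]
      have hx : ∀ a s t : F2, (a + s) + (a + (s + t)) = t := by decide
      rw [hx, get_lt _ i.2]
  
lemma conj_comm (m : ℕ) (hm : 0 < m) (c : Fin (m + 1) → F2) :
    PhiEquiv m (nextMap (n := m + 1) fPRR c) = tau (PhiEquiv m c) := by
  apply Prod.ext
  · show nextMap fPRR c 0 = (PhiEquiv m c).1 + get (PhiEquiv m c).2 0
    have h1 : nextMap (n := m + 1) fPRR c 0 = c ⟨1, by omega⟩ := by
      show (if h : ((0 : Fin (m + 1)) : ℕ) + 1 < m + 1 then _ else _) = _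
      rw [dif_pos (by simp; omega)]
      exact congrArg c (Fin.ext (by simp))
    rw [h1]
    show _ = c 0 + get (fun i : Fin m => c ⟨(i : ℕ), by omega⟩ + c ⟨(i : ℕ) + 1, by omega⟩) 0
    rw [get_lt _ hm]
    show _ = c 0 + (c ⟨0, by omega⟩ + c ⟨1, by omega⟩)
    have h0 : (0 : Fin (m + 1)) = ⟨0, by omega⟩ := Fin.ext rfl
    rw [h0]
    have hx : ∀ a b : F2, a + (a + b) = b := by decide
    exact (hx _ _).symm
  · funext i
    show nextMap fPRR c ⟨(i : ℕ), by omega⟩ + nextMap fPRR c ⟨(i : ℕ) + 1, by omega⟩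
        = rot 1 (PhiEquiv m c).2 i
    have hL1 : nextMap (n := m + 1) fPRR c ⟨(i : ℕ), by omega⟩ = c ⟨(i : ℕ) + 1, by omega⟩ := by
      show (if h : (i : ℕ) + 1 < m + 1 then _ else _) = _
      rw [dif_pos (by omega)]
    have hR : rot 1 (PhiEquiv m c).2 i
        = c ⟨((i : ℕ) + 1) % m, by have := Nat.mod_lt ((i : ℕ) + 1) hm; omega⟩
          + c ⟨((i : ℕ) + 1) % m + 1, by have := Nat.mod_lt ((i : ℕ) + 1) hm; omega⟩ := rfl
    by_cases hi : (i : ℕ) + 1 < m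
    · have hmod : ((i : ℕ) + 1) % m = (i : ℕ) + 1 := Nat.mod_eq_of_lt hi
      have hL2 : nextMap (n := m + 1) fPRR c ⟨(i : ℕ) + 1, by omega⟩
          = c ⟨(i : ℕ) + 2, by omega⟩ := by
        show (if h : (i : ℕ) + 1 + 1 < m + 1 then _ else _) = _
        rw [dif_pos (by omega)]
      rw [hL1, hL2, hR]
      congr 1 <;> exact congrArg c (Fin.ext (by simp [hmod]))
    · have him : (i : ℕ) + 1 = m := by have := i.2; omega
      have hmod : ((i : ℕ) + 1) % m = 0 := by rw [him, Nat.mod_self]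
      have hL2 : nextMap (n := m + 1) fPRR c ⟨(i : ℕ) + 1, by omega⟩ = fPRR c := by
        show (if h : (i : ℕ) + 1 + 1 < m + 1 then _ else _) = _
        rw [dif_neg (by omega)]
      have hfPRR : fPRR (n := m + 1) c
          = c ⟨0, by omega⟩ + c ⟨1, by omega⟩ + c ⟨m, by omega⟩ := by
        show get c 0 + get c 1 + get c (m + 1 - 1) = _
        rw [Nat.add_sub_cancel, get_lt _ (by omega : (0:ℕ) < m + 1),
          get_lt _ (by omega : (1:ℕ) < m + 1), get_lt _ (by omega : m < m + 1)]
      rw [hL1, hL2, hR, hfPRR]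
      have hc1 : c ⟨(i : ℕ) + 1, by omega⟩ = c ⟨m, by omega⟩ :=
        congrArg c (Fin.ext (by simp [him]))
      have hc2 : c ⟨((i : ℕ) + 1) % m, by have := Nat.mod_lt ((i : ℕ) + 1) hm; omega⟩
          = c ⟨0, by omega⟩ := congrArg c (Fin.ext (by simp [hmod]))
      have hc3 : c ⟨((i : ℕ) + 1) % m + 1, by have := Nat.mod_lt ((i : ℕ) + 1) hm; omega⟩
          = c ⟨1, by omega⟩ := congrArg c (Fin.ext (by simp [hmod]))
      rw [hc1, hc2, hc3]
      have hx : ∀ a b d : F2, d + (a + b + d) = a + b := by decide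
      exact hx _ _ _

end PRRAux

/-- the number of cycles of the PRR of order `n` is `Z_{n-1} + Z*_{n-1}`,
where `(n-1)·Z_{n-1} = Σ_{d ∣ n-1} φ(d)·2^{(n-1)/d}` and
`2(n-1)·Z*_{n-1} = Σ_{d ∣ n-1, d odd} φ(d)·2^{(n-1)/d}`. -/
theorem prr_number_of_cycles (n : ℕ) (hn : 3 ≤ n) :
    ∃ Z Zs : ℕ,
      (n - 1) * Z = ∑ d ∈ (n - 1).divisors, Nat.totient d * 2 ^ ((n - 1) / d) ∧
      2 * (n - 1) * Zs =
        ∑ d ∈ (n - 1).divisors.filter (fun d => Odd d), Nat.totient d * 2 ^ ((n - 1) / d) ∧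
      {O : Set (Fin n → F2) | ∃ v, O = orbit (nextMap (n := n) fPRR) v}.ncard = Z + Zs := by
  classical
  obtain ⟨m, rfl⟩ : ∃ m, n = m + 1 := ⟨n - 1, by omega⟩
  have hm : 0 < m := by omega
  have hm1 : (m + 1) - 1 = m := by omega
  have hrot_iter : ∀ k (u : Fin m → F2), (rot 1)^[k] u = rot k u := by
    intro k
    induction k with
    | zero => intro u; exact (PRRAux.rot_zero u).symm
    | succ k ih =>
      intro u
      rw [Function.iterate_succ_apply', ih, PRRAux.rot_rot, Nat.add_comm 1 k]
  have hrot_id : (rot 1 (m := m))^[m] = id := by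
    funext u
    rw [hrot_iter, PRRAux.rot_m]
    rfl
  have hZA : m * {O : Set (Fin m → F2) | ∃ v, O = orbit (rot 1) v}.ncard
      = ∑ d ∈ m.divisors, Nat.totient d * 2 ^ (m / d) := by
    rw [PRRAux.burnside (rot 1 (m := m)) m hm hrot_id]
    have hterm : ∀ k ∈ Finset.range m,
        Nat.card {u : Fin m → F2 // (rot 1)^[k] u = u} = 2 ^ Nat.gcd k m := by
      intro k _
      have e : {u : Fin m → F2 // (rot 1)^[k] u = u}
          ≃ {u : Fin m → F2 // rot (Nat.gcd k m) u = u} :=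
        Equiv.subtypeEquivRight (fun u => by
          rw [hrot_iter k u]
          exact PRRAux.rot_eq_gcd_iff hm k u)
      rw [Nat.card_congr e,
        PRRAux.card_rot_fixed hm (Nat.gcd_dvd_right k m) (Nat.gcd_pos_of_pos_right _ hm)]
    rw [Finset.sum_congr rfl hterm, PRRAux.bucket m hm (fun x => 2 ^ x)]
  have hTB : 2 * m * {O : Set (F2 × (Fin m → F2)) | ∃ v, O = orbit PRRAux.tau v}.ncard
      = 2 * (∑ d ∈ m.divisors, Nat.totient d * 2 ^ (m / d))
        + ∑ d ∈ m.divisors.filter (fun d => Odd d), Nat.totient d * 2 ^ (m / d) := by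
    rw [PRRAux.burnside (PRRAux.tau (m := m)) (2 * m) (by omega) (PRRAux.tau_iterate_id hm)]
    have hterm : ∀ k ∈ Finset.range (2 * m),
        Nat.card {p : F2 × (Fin m → F2) // PRRAux.tau^[k] p = p}
          = (if Even (k / Nat.gcd k m) then 2 ^ (Nat.gcd k m + 1) else 2 ^ (Nat.gcd k m)) :=
      fun k _ => PRRAux.card_tau_fixed hm k
    rw [Finset.sum_congr rfl hterm, PRRAux.sum_fixed_total m hm]
  have horb : {O : Set (Fin (m + 1) → F2) | ∃ v, O = orbit (nextMap fPRR) v}.ncard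
      = {O : Set (F2 × (Fin m → F2)) | ∃ v, O = orbit PRRAux.tau v}.ncard :=
    PRRAux.ncard_orbits_eq (PRRAux.PhiEquiv m) (nextMap fPRR) PRRAux.tau
      (PRRAux.conj_comm m hm)
  simp only [hm1]
  set A := ∑ d ∈ m.divisors, Nat.totient d * 2 ^ (m / d) with hAdef
  set B := ∑ d ∈ m.divisors.filter (fun d => Odd d), Nat.totient d * 2 ^ (m / d) with hBdef
  set Zn := {O : Set (Fin m → F2) | ∃ v, O = orbit (rot 1) v}.ncard with hZndef
  set Tn := {O : Set (F2 × (Fin m → F2)) | ∃ v, O = orbit PRRAux.tau v}.ncard with hTndef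
  have h2 : 2 * m * Zn = 2 * A := by rw [Nat.mul_assoc, hZA]
  have hZT : Zn ≤ Tn := by
    have hle : 2 * m * Zn ≤ 2 * m * Tn := by
      rw [hTB, h2]
      omega
    exact Nat.le_of_mul_le_mul_left hle (by omega)
  obtain ⟨x, hx⟩ : ∃ x, Tn = Zn + x := ⟨Tn - Zn, by omega⟩
  refine ⟨Zn, x, hZA, ?_, ?_⟩
  · have h1 : 2 * m * Tn = 2 * m * Zn + B := by rw [hTB, h2]
    rw [hx, Nat.mul_add] at h1
    exact Nat.add_left_cancel h1
  · rw [horb, hx]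
end
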